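/- arXiv:math/9501220 — 7 statements merged into one kernel-verified Lean document; each statement's English description precedes it below -/
import Mathlib

section
/- Let λ be a singular cardinal which is the limit of a strictly increasing sequence of strongly compact cardinals. Then there are no Aronszajn trees of height λ⁺: every tree of height λ⁺ all of whose levels have cardinality at most λ has a chain of cardinality λ⁺. -/
universe u

open Cardinal

/-- A filter is `κ`-complete if it is closed under intersections of families of
fewer than `κ` of its members. -/
def Filter.IsCardComplete {X : Type u} (F : Filter X) (κ : Cardinal.{u}) : Prop :=
  ∀ s : Set (Set X), (∀ A ∈ s, A ∈ F) → #s < κ → ⋂₀ s ∈ F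

/-- A cardinal `κ` is strongly compact if, for every set `X`, every `κ`-complete (proper)
filter on `X` extends to a `κ`-complete ultrafilter on `X`. -/
def IsStronglyCompact (κ : Cardinal.{u}) : Prop :=
  ∀ (X : Type u) (F : Filter X), F.NeBot → F.IsCardComplete κ →
    ∃ U : Ultrafilter X, (U : Filter X) ≤ F ∧ (U : Filter X).IsCardComplete κ

/-- A tree: a transitive relation such that the set of strict predecessors of
every element is well-ordered. -/
structure IsTree {T : Type u} (lt : T → T → Prop) : Prop where
  trans : ∀ {x y z : T}, lt x y → lt y z → lt x z
  wo : ∀ x : T, IsWellOrder {y : T // lt y x} fun a b => lt a.1 b.1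

/-- The level of a node of a tree: the order type of its set of strict predecessors. -/
noncomputable def IsTree.level {T : Type u} {lt : T → T → Prop} (h : IsTree lt) (x : T) :
    Ordinal.{u} :=
  @Ordinal.type {y : T // lt y x} (fun a b => lt a.1 b.1) (h.wo x)

section TreeAux

variable {T : Type u} {lt : T → T → Prop}

theorem IsTree.level_eq_typein (ht : IsTree lt) {x y : T} (h : lt y x) :
    ht.level y = @Ordinal.typein {z : T // lt z x} (fun a b => lt a.1 b.1) (ht.wo x) ⟨y, h⟩ := by
  letI := ht.wo x
  letI := ht.wo y
  rw [← Ordinal.type_subrel]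
  exact RelIso.ordinal_type_eq
    ⟨⟨fun z => ⟨⟨z.1, ht.trans z.2 h⟩, z.2⟩, fun w => ⟨w.1.1, w.2⟩,
      fun z => rfl, fun w => rfl⟩, Iff.rfl⟩

theorem IsTree.level_lt_of_lt (ht : IsTree lt) {x y : T} (h : lt y x) :
    ht.level y < ht.level x := by
  letI := ht.wo x
  rw [ht.level_eq_typein h]
  exact Ordinal.typein_lt_type _ _

theorem IsTree.lt_of_lt_of_level_lt (ht : IsTree lt) {x u v : T} (hu : lt u x) (hv : lt v x)
    (h : ht.level u < ht.level v) : lt u v := by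
  letI := ht.wo x
  rw [ht.level_eq_typein hu, ht.level_eq_typein hv] at h
  exact (Ordinal.typein_lt_typein (fun a b : {z : T // lt z x} => lt a.1 b.1)).1 h

/-- The predecessor of `x` at level `α` (junk value `x` if `α` is not below the level of `x`). -/
noncomputable def IsTree.pr (ht : IsTree lt) (x : T) (α : Ordinal.{u}) : T :=
  if h : α < ht.level x then
    (@Ordinal.enum {z : T // lt z x} (fun a b => lt a.1 b.1) (ht.wo x) ⟨α, h⟩).1
  else x

theorem IsTree.pr_lt (ht : IsTree lt) {x : T} {α : Ordinal.{u}} (h : α < ht.level x) :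
    lt (ht.pr x α) x := by
  rw [IsTree.pr, dif_pos h]
  exact (@Ordinal.enum {z : T // lt z x} (fun a b => lt a.1 b.1) (ht.wo x) ⟨α, h⟩).2

theorem IsTree.pr_level (ht : IsTree lt) {x : T} {α : Ordinal.{u}} (h : α < ht.level x) :
    ht.level (ht.pr x α) = α := by
  letI := ht.wo x
  have hlt : lt (ht.pr x α) x := ht.pr_lt h
  have he : (⟨ht.pr x α, hlt⟩ : {z : T // lt z x}) =
      @Ordinal.enum {z : T // lt z x} (fun a b => lt a.1 b.1) (ht.wo x) ⟨α, h⟩ := by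
    apply Subtype.ext
    show ht.pr x α = _
    rw [IsTree.pr, dif_pos h]
  rw [ht.level_eq_typein hlt, he]
  exact Ordinal.typein_enum _ h

end TreeAux

section UltraAux

theorem ultra_exists_mem {X : Type u} (V : Ultrafilter X) {μ : Cardinal.{u}}
    (hc : (V : Filter X).IsCardComplete μ) {ι : Type u} (g : ι → Set X) (hι : #ι < μ)
    {A : Set X} (hA : A ∈ (V : Filter X)) (hcov : A ⊆ ⋃ i, g i) : ∃ i, g i ∈ (V : Filter X) := by
  by_contra hno
  push_neg at hno
  have hcompl : ∀ i, (g i)ᶜ ∈ (V : Filter X) := fun i =>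
    (Ultrafilter.compl_mem_iff_notMem).2 (hno i)
  have hs : ⋂₀ (Set.range fun i => (g i)ᶜ) ∈ (V : Filter X) := by
    refine hc _ ?_ (Cardinal.mk_range_le.trans_lt hι)
    rintro B ⟨i, rfl⟩
    exact hcompl i
  obtain ⟨x, hx1, hx2⟩ := Filter.nonempty_of_mem (Filter.inter_mem hA hs)
  obtain ⟨i, hi⟩ := Set.mem_iUnion.1 (hcov hx1)
  exact (hx2 _ ⟨i, rfl⟩) hi

theorem exists_big_fiber {X : Type u} {lam : Cardinal.{u}} (hinf : ℵ₀ ≤ lam) {A : Set X}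
    (hA : #A = Order.succ lam) {ι : Type u} (hι : #ι ≤ lam) (g : ι → Set X)
    (hcov : A ⊆ ⋃ i, g i) : ∃ i, #(g i ∩ A : Set X) = Order.succ lam := by
  by_contra hno
  push_neg at hno
  have hle : ∀ i, #(g i ∩ A : Set X) ≤ lam := fun i =>
    Order.lt_succ_iff.1 (lt_of_le_of_ne
      ((Cardinal.mk_le_mk_of_subset Set.inter_subset_right).trans_eq hA) (hno i))
  have hsub : A ⊆ ⋃ i, (g i ∩ A) := fun x hx => by
    obtain ⟨i, hi⟩ := Set.mem_iUnion.1 (hcov hx)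
    exact Set.mem_iUnion.2 ⟨i, hi, hx⟩
  have hcontr : Order.succ lam ≤ lam := by
    calc Order.succ lam = #A := hA.symm
    _ ≤ #(⋃ i, (g i ∩ A) : Set X) := Cardinal.mk_le_mk_of_subset hsub
    _ ≤ #ι * ⨆ i, #(g i ∩ A : Set X) := Cardinal.mk_iUnion_le _
    _ ≤ lam * lam := mul_le_mul' hι (ciSup_le' hle)
    _ = lam := Cardinal.mul_eq_self hinf
  exact (Order.lt_succ lam).not_ge hcontr

end UltraAux

/-- If `λ` is a singular cardinal which is the limit of a strictly increasing sequence of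
strongly compact cardinals, then every tree of height `λ⁺` all of whose levels have
cardinality at most `λ` has a chain of cardinality `λ⁺`. -/
theorem no_aronszajn_tree_of_singular_limit_of_stronglyCompact
    (lam : Cardinal.{u}) (hinf : ℵ₀ ≤ lam) (hsing : lam.ord.cof < lam)
    (hlim : ∀ μ < lam, ∃ κ, μ < κ ∧ κ < lam ∧ IsStronglyCompact κ)
    {T : Type u} (lt : T → T → Prop) (ht : IsTree lt)
    (hheight : ∀ x : T, ht.level x < (Order.succ lam).ord)
    (hfull : ∀ α < (Order.succ lam).ord, ∃ x : T, ht.level x = α)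
    (hlevels : ∀ α : Ordinal.{u}, #{x : T // ht.level x = α} ≤ lam) :
    ∃ C : Set T, (∀ x ∈ C, ∀ y ∈ C, x ≠ y → lt x y ∨ lt y x) ∧ #C = Order.succ lam := by
  classical
  have hlamΛ : lam < Order.succ lam := Order.lt_succ lam
  have hΛinf : ℵ₀ ≤ Order.succ lam := hinf.trans hlamΛ.le
  have hreg : (Order.succ lam).IsRegular := Cardinal.isRegular_succ hinf
  have hOlim : Order.IsSuccLimit (Order.succ lam).ord := Cardinal.isSuccLimit_ord hΛinf
  have hcofO : (Order.succ lam).ord.cof = Order.succ lam := hreg.cof_eq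
  have hlamlim : Order.IsSuccLimit lam.ord := Cardinal.isSuccLimit_ord hinf
  have hTne : Nonempty T := ⟨(hfull 0 hOlim.pos).choose⟩
  -- tail sets and the tail filter
  set L : Ordinal.{u} → Set T := fun γ => {x | γ < ht.level x} with hLdef
  have hLmono : ∀ {γ δ : Ordinal.{u}}, γ ≤ δ → L δ ⊆ L γ := fun h x hx => lt_of_le_of_lt h hx
  let F : Filter T :=
    { sets := {A | ∃ γ, γ < (Order.succ lam).ord ∧ L γ ⊆ A}
      univ_sets := ⟨0, hOlim.pos, fun x _ => trivial⟩
      sets_of_superset := by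
        rintro A B ⟨γ, hγ, hsub⟩ hAB
        exact ⟨γ, hγ, hsub.trans hAB⟩
      inter_sets := by
        rintro A B ⟨γ, hγ, h1⟩ ⟨δ, hδ, h2⟩
        exact ⟨max γ δ, max_lt hγ hδ, fun x hx =>
          ⟨h1 (hLmono (le_max_left _ _) hx), h2 (hLmono (le_max_right _ _) hx)⟩⟩ }
  have hmemF : ∀ {A : Set T}, (∃ γ, γ < (Order.succ lam).ord ∧ L γ ⊆ A) → A ∈ F := fun h => h
  have hmemF' : ∀ {A : Set T}, A ∈ F → ∃ γ, γ < (Order.succ lam).ord ∧ L γ ⊆ A := fun h => h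
  have hLF : ∀ γ, γ < (Order.succ lam).ord → L γ ∈ F := fun γ hγ => hmemF ⟨γ, hγ, subset_rfl⟩
  have hLne : ∀ γ, γ < (Order.succ lam).ord → (L γ).Nonempty := by
    intro γ hγ
    obtain ⟨x, hx⟩ := hfull (Order.succ γ) (hOlim.succ_lt hγ)
    exact ⟨x, show γ < ht.level x by rw [hx]; exact Order.lt_succ γ⟩
  have hFne : F.NeBot := by
    refine Filter.neBot_iff.2 fun hbot => ?_
    have h0 : (∅ : Set T) ∈ F := by rw [hbot]; exact Filter.mem_bot
    obtain ⟨γ, hγ, hsub⟩ := hmemF' h0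
    obtain ⟨x, hx⟩ := hLne γ hγ
    exact hsub hx
  have hFcomp : ∀ κ' : Cardinal.{u}, κ' ≤ Order.succ lam → F.IsCardComplete κ' := by
    intro κ' hκ' s hmem hcard
    have hγch : ∀ A : s, ∃ γ, γ < (Order.succ lam).ord ∧ L γ ⊆ (A : Set T) :=
      fun A => hmemF' (hmem A A.2)
    choose γf hγlt hγsub using hγch
    have hsup : (⨆ A, γf A) < (Order.succ lam).ord :=
      Ordinal.iSup_lt_ord (by rw [hcofO]; exact hcard.trans_le hκ') hγlt
    refine hmemF ⟨_, hsup, ?_⟩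
    intro x hx
    refine Set.mem_sInter.2 fun A hA => ?_
    exact hγsub ⟨A, hA⟩ (hLmono (Ordinal.le_iSup γf ⟨A, hA⟩) hx)
  -- the first strongly compact cardinal and ultrafilter
  obtain ⟨κ, hρκ, hκlam, hκsc⟩ := hlim lam.ord.cof hsing
  obtain ⟨U, hUF, hUcomp⟩ := hκsc T F hFne (hFcomp κ (hκlam.le.trans hlamΛ.le))
  have hUmem : ∀ {A : Set T}, A ∈ F → A ∈ (U : Filter T) := fun hA => hUF hA
  -- a cofinal family in lam.ord
  obtain ⟨Cρ, f, hflsub, hfmk⟩ := Ordinal.exists_lsub_cof lam.ord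
  have hfi : ∀ i, f i < lam.ord := fun i => hflsub ▸ Ordinal.lt_lsub f i
  -- injections of the levels into lam.ord.ToType
  have hq : ∀ α : Ordinal.{u}, ∃ g : {y : T // ht.level y = α} → lam.ord.ToType,
      Function.Injective g := by
    intro α
    have h1 : #{y : T // ht.level y = α} ≤ #(lam.ord.ToType) := by
      rw [Cardinal.mk_toType, Cardinal.card_ord]
      exact hlevels α
    obtain ⟨e⟩ := (Cardinal.le_def _ _).1 h1
    exact ⟨e, e.injective⟩
  choose q hqinj using hq
  let rk : lam.ord.ToType → Ordinal.{u} := fun z => @Ordinal.typein _ (· < ·) isWellOrder_lt z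
  have hrklt : ∀ z : lam.ord.ToType, rk z < lam.ord := fun z => Ordinal.typein_lt_self z
  have hrkinj : Function.Injective rk := @Ordinal.typein_injective _ (· < ·) isWellOrder_lt
  let rkO : (Order.succ lam).ord.ToType → Ordinal.{u} :=
    fun z => @Ordinal.typein _ (· < ·) isWellOrder_lt z
  have hrkOlt : ∀ z : (Order.succ lam).ord.ToType, rkO z < (Order.succ lam).ord :=
    fun z => Ordinal.typein_lt_self z
  have hrkOinj : Function.Injective rkO := @Ordinal.typein_injective _ (· < ·) isWellOrder_lt
  -- pieces of levels, and the corresponding large sets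
  set P : T → Cρ → Set T := fun a i =>
    {y : T | ∃ h : ht.level y = ht.level a,
      rk (q (ht.level a) ⟨y, h⟩) ≤ f i} with hPdef
  set Bs : T → Cρ → Set T := fun a i =>
    {x : T | ht.level a < ht.level x ∧ ht.pr x (ht.level a) ∈ P a i} with hBdef
  have hBcov : ∀ a : T, L (ht.level a) ⊆ ⋃ i, Bs a i := by
    intro a x hx
    have hlt : ht.level a < ht.level x := hx
    have hy : ht.level (ht.pr x (ht.level a)) = ht.level a := ht.pr_level hlt
    have h2 : rk (q (ht.level a) ⟨_, hy⟩) < lam.ord := hrklt _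
    rw [← hflsub] at h2
    obtain ⟨i, hi⟩ := Ordinal.lt_lsub_iff.1 h2
    exact Set.mem_iUnion.2 ⟨i, hlt, hy, hi⟩
  have hidx : ∀ a : T, ∃ i, Bs a i ∈ (U : Filter T) := by
    intro a
    refine ultra_exists_mem U hUcomp (Bs a) ?_ (hUmem (hLF _ (hheight a))) (hBcov a)
    rw [hfmk]
    exact hρκ
  choose idx hidxU using hidx
  -- representatives of the levels
  have htex : ∀ α : Ordinal.{u}, ∃ x : T, α < (Order.succ lam).ord → ht.level x = α := by
    intro α
    by_cases h : α < (Order.succ lam).ord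
    · obtain ⟨x, hx⟩ := hfull α h
      exact ⟨x, fun _ => hx⟩
    · exact ⟨Classical.arbitrary T, fun hc => absurd hc h⟩
  choose t htlev using htex
  set R : Set T := {a : T | t (ht.level a) = a} with hRdef
  have htR : ∀ α, α < (Order.succ lam).ord → t α ∈ R := by
    intro α hα
    show t (ht.level (t α)) = t α
    rw [htlev α hα]
  have hRlevinj : ∀ a ∈ R, ∀ b ∈ R, ht.level a = ht.level b → a = b := by
    intro a ha b hb he
    calc a = t (ht.level a) := ha.symm
    _ = t (ht.level b) := by rw [he]
    _ = b := hb
  have hOcard : #((Order.succ lam).ord.ToType) = Order.succ lam := by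
    rw [Cardinal.mk_toType, Cardinal.card_ord]
  have hRcard : #(R : Set T) = Order.succ lam := by
    apply le_antisymm
    · have hinj : Function.Injective (fun a : R =>
          (Ordinal.ToType.mk (o := (Order.succ lam).ord)) ⟨ht.level a.1, hheight a.1⟩) := by
        intro a b hab
        have h1 := ((Ordinal.ToType.mk (o := (Order.succ lam).ord))).injective hab
        have h2 : ht.level a.1 = ht.level b.1 := congrArg Subtype.val h1
        exact Subtype.ext (hRlevinj _ a.2 _ b.2 h2)
      exact (Cardinal.mk_le_of_injective hinj).trans hOcard.le
    · rw [← hOcard]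
      have hinj : Function.Injective (fun z : (Order.succ lam).ord.ToType =>
          (⟨t (rkO z), htR _ (hrkOlt z)⟩ : R)) := by
        intro z z' h
        have h1 : t (rkO z) = t (rkO z') := congrArg Subtype.val h
        have e1 := htlev _ (hrkOlt z)
        have e2 := htlev _ (hrkOlt z')
        have h2 : rkO z = rkO z' := by rw [← e1, ← e2, h1]
        exact hrkOinj h2
      exact Cardinal.mk_le_of_injective hinj
  -- stabilize the piece index on a large set of representatives
  obtain ⟨istar, hScard⟩ := exists_big_fiber hinf hRcard (ι := Cρ)
    (by rw [hfmk]; exact hsing.le) (fun i => {a : T | idx a = i})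
    (fun a _ => Set.mem_iUnion.2 ⟨idx a, rfl⟩)
  set S : Set T := {a : T | idx a = istar} ∩ R with hSdef
  have hSsub : S ⊆ R := Set.inter_subset_right
  have hSidx : ∀ a ∈ S, idx a = istar := fun a ha => ha.1
  -- the uniform bound on the pieces
  set ν : Cardinal.{u} := (Order.succ (f istar)).card with hνdef
  have hν : ν < lam := Cardinal.lt_ord.1 (hlamlim.succ_lt (hfi istar))
  have hPcard : ∀ a : T, #(P a istar : Set T) ≤ ν := by
    intro a
    have hinj : Function.Injective (fun y : (P a istar : Set T) =>
        (Ordinal.ToType.mk (o := (Order.succ (f istar))))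
          ⟨rk (q (ht.level a) ⟨y.1, y.2.choose⟩),
           lt_of_le_of_lt y.2.choose_spec (Order.lt_succ _)⟩) := by
      intro y y' h
      have h1 := ((Ordinal.ToType.mk (o := (Order.succ (f istar))))).injective h
      have h2 : rk (q (ht.level a) ⟨y.1, y.2.choose⟩) =
          rk (q (ht.level a) ⟨y'.1, y'.2.choose⟩) :=
        congrArg Subtype.val h1
      have h3 := hrkinj h2
      have h4 := hqinj _ h3
      have h5 : (y.1 : T) = y'.1 :=
        congrArg (Subtype.val : {z : T // ht.level z = ht.level a} → T) h4
      exact Subtype.ext h5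
    calc #(P a istar : Set T) ≤ #((Order.succ (f istar)).ToType) :=
          Cardinal.mk_le_of_injective hinj
    _ = ν := by rw [Cardinal.mk_toType]
  set ν' : Cardinal.{u} := max ν ℵ₀ with hν'def
  have hν'inf : ℵ₀ ≤ ν' := le_max_right _ _
  have haleph : ℵ₀ < lam := by
    rcases lt_or_eq_of_le hinf with h | h
    · exact h
    · exfalso
      rw [← h, Cardinal.ord_aleph0, Ordinal.cof_omega0] at hsing
      exact lt_irrefl _ hsing
  have hν'lam : ν' < lam := max_lt hν haleph
  -- the second strongly compact cardinal and ultrafilter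
  obtain ⟨μ, hν'μ, hμlam, hμsc⟩ := hlim ν' hν'lam
  obtain ⟨W, hWF, hWcomp⟩ := hμsc T F hFne (hFcomp μ (hμlam.le.trans hlamΛ.le))
  have hWmem : ∀ {A : Set T}, A ∈ F → A ∈ (W : Filter T) := fun hA => hWF hA
  -- the index type for enumerations
  set N : Type u := ν'.ord.ToType with hNdef
  have hNcard : #N = ν' := by rw [hNdef, Cardinal.mk_toType, Cardinal.card_ord]
  have hNne : Nonempty N := by
    rw [hNdef]
    refine Ordinal.nonempty_toType_iff.2 fun h0 => ?_
    have hc := Cardinal.card_ord ν'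
    rw [h0, Ordinal.card_zero] at hc
    rw [← hc] at hν'inf
    exact (Cardinal.aleph0_pos).not_ge hν'inf
  -- the pieces on S are nonempty
  have hDne : ∀ a ∈ S, ∃ y, y ∈ P a istar := by
    intro a ha
    have hBU : Bs a istar ∈ (U : Filter T) := by
      have := hidxU a
      rwa [hSidx a ha] at this
    obtain ⟨x, hx⟩ := Filter.nonempty_of_mem hBU
    exact ⟨_, hx.2⟩
  -- enumerations of the pieces
  have heN : ∀ a : T, ∃ e : N → T, a ∈ S →
      (∀ n, e n ∈ P a istar) ∧ ∀ y ∈ P a istar, ∃ n, e n = y := by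
    intro a
    by_cases ha : a ∈ S
    · obtain ⟨y0, hy0⟩ := hDne a ha
      have hle : #(P a istar : Set T) ≤ #N := by
        rw [hNcard]
        exact (hPcard a).trans (le_max_left _ _)
      obtain ⟨emb⟩ := (Cardinal.le_def _ _).1 hle
      refine ⟨fun n => if h : ∃ y : (P a istar : Set T), emb y = n then h.choose.1 else y0,
        fun _ => ⟨?_, ?_⟩⟩
      · intro n
        dsimp only
        split_ifs with h
        · exact h.choose.2
        · exact hy0
      · intro y hy
        refine ⟨emb ⟨y, hy⟩, ?_⟩
        dsimp only
        have hex : ∃ y' : (P a istar : Set T), emb y' = emb ⟨y, hy⟩ := ⟨⟨y, hy⟩, rfl⟩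
        rw [dif_pos hex]
        have h5 : hex.choose = ⟨y, hy⟩ := emb.injective hex.choose_spec
        exact congrArg Subtype.val h5
    · exact ⟨fun _ => a, fun h => absurd h ha⟩
  choose eN heN2 using heN
  -- a selection of higher levels
  have hstep : ∀ (A : Set T), A ⊆ R → #(A : Set T) = Order.succ lam →
      ∀ x : T, ∃ a ∈ A, ht.level x < ht.level a := by
    intro A hAR hAc x
    by_contra hcon
    push_neg at hcon
    have hsx : Order.succ (ht.level x) < (Order.succ lam).ord := hOlim.succ_lt (hheight x)
    have hinj : Function.Injective (fun a : A =>
        (Ordinal.ToType.mk (o := (Order.succ (ht.level x))))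
          ⟨ht.level a.1, Order.lt_succ_iff.2 (hcon a.1 a.2)⟩) := by
      intro a b h
      have h1 := ((Ordinal.ToType.mk (o := (Order.succ (ht.level x))))).injective h
      exact Subtype.ext (hRlevinj _ (hAR a.2) _ (hAR b.2) (congrArg Subtype.val h1))
    have hcard1 : Order.succ lam ≤ (Order.succ (ht.level x)).card := by
      rw [← hAc, ← Cardinal.mk_toType]
      exact Cardinal.mk_le_of_injective hinj
    exact absurd (Cardinal.lt_ord.1 hsx) (not_lt.2 hcard1)
  have hσex : ∀ x : T, ∃ a, a ∈ S ∧ ht.level x < ht.level a := by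
    intro x
    obtain ⟨a, h1, h2⟩ := hstep S hSsub hScard x
    exact ⟨a, h1, h2⟩
  choose σ hσS hσlt using hσex
  -- witnesses for pairs of levels in S
  have hwex : ∀ a b : T, ∃ p : T × N, a ∈ S → b ∈ S → ht.level a < ht.level b →
      p.1 ∈ P a istar ∧ lt p.1 (eN b p.2) := by
    intro a b
    by_cases hab : a ∈ S ∧ b ∈ S ∧ ht.level a < ht.level b
    · obtain ⟨ha, hb, hlev⟩ := hab
      have hBa : Bs a istar ∈ (U : Filter T) := by
        have := hidxU a; rwa [hSidx a ha] at this
      have hBb : Bs b istar ∈ (U : Filter T) := by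
        have := hidxU b; rwa [hSidx b hb] at this
      have hmem : Bs a istar ∩ (Bs b istar ∩ L (ht.level b)) ∈ (U : Filter T) :=
        Filter.inter_mem hBa (Filter.inter_mem hBb (hUmem (hLF _ (hheight b))))
      obtain ⟨x, hx⟩ := Filter.nonempty_of_mem hmem
      obtain ⟨hx1, hx2, _⟩ := hx
      have hu_lt : lt (ht.pr x (ht.level a)) x := ht.pr_lt hx1.1
      have hy_lt : lt (ht.pr x (ht.level b)) x := ht.pr_lt hx2.1
      have hulev : ht.level (ht.pr x (ht.level a)) = ht.level a := ht.pr_level hx1.1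
      have hylev : ht.level (ht.pr x (ht.level b)) = ht.level b := ht.pr_level hx2.1
      have huy : lt (ht.pr x (ht.level a)) (ht.pr x (ht.level b)) :=
        ht.lt_of_lt_of_level_lt hu_lt hy_lt (by rw [hulev, hylev]; exact hlev)
      obtain ⟨n, hn⟩ := (heN2 b hb).2 _ hx2.2
      refine ⟨(ht.pr x (ht.level a), n), fun _ _ _ => ⟨hx1.2, ?_⟩⟩
      show lt (ht.pr x (ht.level a)) (eN b n)
      rw [hn]
      exact huy
    · exact ⟨(a, Classical.arbitrary N), fun h1 h2 h3 => absurd ⟨h1, h2, h3⟩ hab⟩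
  choose w hwspec using hwex
  have hPlev : ∀ {a y : T}, y ∈ P a istar → ht.level y = ht.level a := fun h => h.choose
  -- stabilize the witnesses along W
  have hgood : ∀ a, a ∈ S → ∃ p : T × N,
      p.1 ∈ P a istar ∧ {x : T | ht.level a < ht.level x ∧ w a (σ x) = p} ∈ (W : Filter T) := by
    intro a ha
    have hcards : #({y : T // y ∈ P a istar} × N) < μ := by
      rw [Cardinal.mk_prod, Cardinal.lift_id, Cardinal.lift_id, hNcard]
      calc #{y : T // y ∈ P a istar} * ν' ≤ ν' * ν' :=
            mul_le_mul' ((hPcard a).trans (le_max_left _ _)) le_rfl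
      _ = ν' := Cardinal.mul_eq_self hν'inf
      _ < μ := hν'μ
    have hcov : L (ht.level a) ⊆ ⋃ p : {y : T // y ∈ P a istar} × N,
        {x : T | ht.level a < ht.level x ∧ w a (σ x) = (p.1.1, p.2)} := by
      intro x hx
      have h1 : ht.level a < ht.level x := hx
      have h2 : ht.level a < ht.level (σ x) := h1.trans (hσlt x)
      have h3 := hwspec a (σ x) ha (hσS x) h2
      exact Set.mem_iUnion.2 ⟨(⟨(w a (σ x)).1, h3.1⟩, (w a (σ x)).2), h1, rfl⟩
    obtain ⟨p, hp⟩ := ultra_exists_mem W hWcomp _ hcards (hWmem (hLF _ (hheight a))) hcov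
    exact ⟨(p.1.1, p.2), p.1.2, hp⟩
  have hbnex : ∀ a : T, ∃ p : T × N, a ∈ S →
      p.1 ∈ P a istar ∧ {x : T | ht.level a < ht.level x ∧ w a (σ x) = p} ∈ (W : Filter T) := by
    intro a
    by_cases ha : a ∈ S
    · obtain ⟨p, h1, h2⟩ := hgood a ha
      exact ⟨p, fun _ => ⟨h1, h2⟩⟩
    · exact ⟨(a, Classical.arbitrary N), fun h => absurd h ha⟩
  choose bn hbnspec using hbnex
  -- stabilize the second coordinate
  obtain ⟨nstar, hS'card⟩ := exists_big_fiber hinf hScard (ι := N)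
    (by rw [hNcard]; exact hν'lam.le) (fun n => {a : T | (bn a).2 = n})
    (fun a _ => Set.mem_iUnion.2 ⟨(bn a).2, rfl⟩)
  set S' : Set T := {a : T | (bn a).2 = nstar} ∩ S with hS'def
  have hS'S : S' ⊆ S := Set.inter_subset_right
  have hblev : ∀ a ∈ S, ht.level ((bn a).1) = ht.level a :=
    fun a ha => hPlev ((hbnspec a ha).1)
  have hG : ∀ a ∈ S,
      {x : T | ht.level a < ht.level x ∧ w a (σ x) = bn a} ∈ (W : Filter T) :=
    fun a ha => (hbnspec a ha).2
  -- the chain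
  have hkey : ∀ a ∈ S', ∀ c ∈ S', ht.level a < ht.level c → lt ((bn a).1) ((bn c).1) := by
    intro a ha c hc hlev
    obtain ⟨x, hx⟩ := Filter.nonempty_of_mem
      (Filter.inter_mem (hG a (hS'S ha)) (hG c (hS'S hc)))
    obtain ⟨⟨hax, haw⟩, hcx, hcw⟩ := hx
    have hσa : ht.level a < ht.level (σ x) := hax.trans (hσlt x)
    have hσc : ht.level c < ht.level (σ x) := hcx.trans (hσlt x)
    have h1 := (hwspec a (σ x) (hS'S ha) (hσS x) hσa).2
    have h2 := (hwspec c (σ x) (hS'S hc) (hσS x) hσc).2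
    rw [haw] at h1
    rw [hcw] at h2
    have hna : (bn a).2 = nstar := ha.1
    have hnc : (bn c).2 = nstar := hc.1
    rw [hna] at h1
    rw [hnc] at h2
    exact ht.lt_of_lt_of_level_lt h1 h2
      (by rw [hblev a (hS'S ha), hblev c (hS'S hc)]; exact hlev)
  refine ⟨(fun a => (bn a).1) '' S', ?_, ?_⟩
  · rintro x ⟨a, ha, rfl⟩ y ⟨c, hc, rfl⟩ hne
    have hac : a ≠ c := fun h => hne (by rw [h])
    have hlev : ht.level a ≠ ht.level c :=
      fun h => hac (hRlevinj _ (hSsub (hS'S ha)) _ (hSsub (hS'S hc)) h)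
    rcases hlev.lt_or_gt with h | h
    · exact Or.inl (hkey a ha c hc h)
    · exact Or.inr (hkey c hc a ha h)
  · have hinj : Set.InjOn (fun a => (bn a).1) S' := by
      intro a ha c hc h
      refine hRlevinj _ (hSsub (hS'S ha)) _ (hSsub (hS'S hc)) ?_
      rw [← hblev a (hS'S ha), ← hblev c (hS'S hc)]
      exact congrArg ht.level h
    exact (Cardinal.mk_image_eq_of_injOn _ _ hinj).trans hS'card
end

section
/- Let ⟨λ_n : n < ω⟩ be a strictly increasing sequence of infinite cardinals with supremum λ, and let T be a tree of height λ⁺ whose underlying set is λ × λ⁺ and whose α-th level is λ × {α} for every α < λ⁺. Suppose u is a countably complete ultrafilter on λ × λ⁺ (closed under countable intersections) that contains every subset of λ × λ⁺ whose complement has cardinality at most λ. Then there exist an unbounded set D ⊆ λ⁺ and an n < ω such that for all α < β in D there are a ∈ λ_n × {α} and b ∈ λ_n × {β} with a <_T b. -/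
universe u

open Cardinal

private abbrev SubT (lam : Cardinal.{u}) : Type (u+1) :=
  {p : Ordinal.{u} × Ordinal.{u} // p.1 < lam.ord ∧ p.2 < (Order.succ lam).ord}

/-- If `⟨λ_n : n < ω⟩` is a strictly increasing sequence of infinite cardinals with supremum
`λ`, `T` is a tree of height `λ⁺` whose underlying set is `λ × λ⁺` and whose `α`-th level is
`λ × {α}` (encoded by: the tree relation `lt` relates only pairs `(ξ, α)` with `ξ < λ`,
`α < λ⁺`, strictly raises the second coordinate, and every node has a unique predecessor at
each smaller level), and `U` is a countably complete ultrafilter on `λ × λ⁺` containing every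
subset whose complement has cardinality at most `λ`, then there are an unbounded `D ⊆ λ⁺`
and an `n < ω` such that for all `α < β` in `D` there are `a ∈ λ_n × {α}` and
`b ∈ λ_n × {β}` with `a <_T b`. -/
theorem tree_has_spine
    (l : ℕ → Cardinal.{u}) (hmono : StrictMono l) (hl0 : ℵ₀ ≤ l 0)
    (lam : Cardinal.{u}) (hlam : lam = ⨆ n, l n)
    (lt : Ordinal.{u} × Ordinal.{u} → Ordinal.{u} × Ordinal.{u} → Prop)
    (htrans : ∀ {p q r}, lt p q → lt q r → lt p r)
    (hdom : ∀ {p q}, lt p q →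
      p.1 < lam.ord ∧ q.1 < lam.ord ∧ p.2 < q.2 ∧ q.2 < (Order.succ lam).ord)
    (hpred : ∀ q : Ordinal.{u} × Ordinal.{u}, q.1 < lam.ord → q.2 < (Order.succ lam).ord →
      ∀ α < q.2, ∃! ξ : Ordinal.{u}, ξ < lam.ord ∧ lt (ξ, α) q)
    (U : Ultrafilter {p : Ordinal.{u} × Ordinal.{u} //
      p.1 < lam.ord ∧ p.2 < (Order.succ lam).ord})
    (hcc : ∀ f : ℕ → Set {p : Ordinal.{u} × Ordinal.{u} //
        p.1 < lam.ord ∧ p.2 < (Order.succ lam).ord},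
      (∀ n, f n ∈ U) → ⋂ n, f n ∈ U)
    (hcosmall : ∀ A : Set {p : Ordinal.{u} × Ordinal.{u} //
        p.1 < lam.ord ∧ p.2 < (Order.succ lam).ord},
      #(Aᶜ : Set _) ≤ Cardinal.lift.{u + 1} lam → A ∈ U) :
    ∃ D : Set Ordinal.{u}, (∀ α ∈ D, α < (Order.succ lam).ord) ∧
      (∀ β < (Order.succ lam).ord, ∃ α ∈ D, β ≤ α) ∧
      ∃ n : ℕ, ∀ α ∈ D, ∀ β ∈ D, α < β →
        ∃ ξ < (l n).ord, ∃ η < (l n).ord, lt (ξ, α) (η, β) := by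
  classical
  have hlaminf : ℵ₀ ≤ lam := by
    rw [hlam]; exact hl0.trans (le_ciSup (Cardinal.bddAbove_range l) 0)
  -- every ordinal below lam.ord is below some (l n).ord
  have hsup : ∀ ξ : Ordinal.{u}, ξ < lam.ord → ∃ n, ξ < (l n).ord := by
    intro ξ h
    rw [Cardinal.lt_ord, hlam] at h
    obtain ⟨n, hn⟩ := exists_lt_of_lt_ciSup' h
    exact ⟨n, Cardinal.lt_ord.mpr hn⟩
  -- the predecessor function
  have hPex : ∀ (α : Ordinal.{u}) (q : SubT lam), α < q.val.2 →
      ∃ ξ : Ordinal.{u}, ξ < lam.ord ∧ lt (ξ, α) q.val := by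
    intro α q h
    exact (hpred q.val q.prop.1 q.prop.2 α h).exists
  set P : Ordinal.{u} → SubT lam → Ordinal.{u} := fun α q =>
    if h : α < q.val.2 then (hPex α q h).choose else 0 with hP
  have hPspec : ∀ (α : Ordinal.{u}) (q : SubT lam) (h : α < q.val.2),
      P α q < lam.ord ∧ lt (P α q, α) q.val := by
    intro α q h
    simp only [hP, dif_pos h]
    exact (hPex α q h).choose_spec
  have hPuniq : ∀ (α : Ordinal.{u}) (q : SubT lam) (h : α < q.val.2) (ξ : Ordinal.{u}),
      ξ < lam.ord → lt (ξ, α) q.val → ξ = P α q := by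
    intro α q h ξ hξ hlt
    obtain ⟨ξ', hξ', huniq⟩ := hpred q.val q.prop.1 q.prop.2 α h
    rw [huniq ξ ⟨hξ, hlt⟩, huniq (P α q) ⟨(hPspec α q h).1, (hPspec α q h).2⟩]
  -- sets with bounded level have small cardinality, so their complements are in U
  have hS : ∀ α < (Order.succ lam).ord, {q : SubT lam | α < q.val.2} ∈ U := by
    intro α hα
    apply hcosmall
    have hinj : ∃ f : ({q : SubT lam | α < q.val.2}ᶜ : Set (SubT lam)) →
        (Set.Iio lam.ord) × (Set.Iic α), Function.Injective f := by
      refine ⟨fun q => (⟨q.val.val.1, q.val.prop.1⟩, ⟨q.val.val.2, ?_⟩), ?_⟩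
      · have hq := q.prop
        simp only [Set.mem_compl_iff, Set.mem_setOf_eq, not_lt] at hq
        exact hq
      · intro q r hqr
        simp only [Prod.mk.injEq, Subtype.mk.injEq] at hqr
        apply Subtype.ext; apply Subtype.ext; exact Prod.ext (congrArg Subtype.val hqr.1) (congrArg Subtype.val hqr.2)
    obtain ⟨f, hf⟩ := hinj
    calc #({q : SubT lam | α < q.val.2}ᶜ : Set (SubT lam)) ≤ #((Set.Iio lam.ord) × (Set.Iic α)) :=
          Cardinal.mk_le_of_injective hf
      _ = #(Set.Iio lam.ord) * #(Set.Iic α) := by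
          rw [Cardinal.mk_prod, Cardinal.lift_id, Cardinal.lift_id]
      _ ≤ Cardinal.lift.{u+1} lam * Cardinal.lift.{u+1} lam := by
          apply mul_le_mul'
          · rw [Ordinal.mk_Iio_ordinal, Cardinal.card_ord]
          · have h1 : α + 1 < (Order.succ lam).ord := by
              have h := (Cardinal.isSuccLimit_ord (hlaminf.trans (Order.le_succ lam))).succ_lt hα
              simpa [Order.succ_eq_add_one] using h
            have h2 : (α + 1).card ≤ lam := by
              rw [Cardinal.lt_ord] at h1
              exact Order.lt_succ_iff.mp h1
            have hIic : Set.Iic α = Set.Iio (α + 1) := by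
              ext x; simp only [Set.mem_Iic, Set.mem_Iio, Order.lt_add_one_iff]
            calc #(Set.Iic α) = #(Set.Iio (α + 1)) := by rw [hIic]
              _ = Cardinal.lift.{u+1} (α+1).card := Ordinal.mk_Iio_ordinal _
              _ ≤ Cardinal.lift.{u+1} lam := Cardinal.lift_le.mpr h2
      _ = Cardinal.lift.{u+1} lam := by
          rw [← Cardinal.lift_mul, Cardinal.mul_eq_self hlaminf]
  -- choose n(α) with the α-predecessor below (l n).ord on a U-large set
  set Tset : ℕ → Ordinal.{u} → Set (SubT lam) :=
    fun n α => {q : SubT lam | α < q.val.2 ∧ P α q < (l n).ord} with hTset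
  have hT : ∀ α < (Order.succ lam).ord, ∃ n, Tset n α ∈ U := by
    intro α hα
    by_contra hcon
    push_neg at hcon
    have hcompl : ∀ n, (Tset n α)ᶜ ∈ U := fun n =>
      (Ultrafilter.compl_mem_iff_notMem).mpr (hcon n)
    have hint : (⋂ n, (Tset n α)ᶜ) ∈ U := hcc _ hcompl
    have hmem : ((⋂ n, (Tset n α)ᶜ) ∩ {q : SubT lam | α < q.val.2}) ∈ U :=
      Filter.inter_mem hint (hS α hα)
    obtain ⟨q, hq1, hq2⟩ := Filter.nonempty_of_mem hmem
    obtain ⟨n, hn⟩ := hsup (P α q) (hPspec α q hq2).1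
    have := Set.mem_iInter.mp hq1 n
    exact this ⟨hq2, hn⟩
  set N : Ordinal.{u} → ℕ := fun α => if h : α < (Order.succ lam).ord then (hT α h).choose else 0 with hN
  have hNspec : ∀ α (h : α < (Order.succ lam).ord), Tset (N α) α ∈ U := by
    intro α h
    simp only [hN, dif_pos h]
    exact (hT α h).choose_spec
  -- one of the sets D_n is unbounded
  have hDn : ∃ n : ℕ, ∀ β < (Order.succ lam).ord, ∃ α, (α < (Order.succ lam).ord ∧ N α = n) ∧ β ≤ α := by
    by_contra hcon
    push_neg at hcon
    choose b hb hbb using hcon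
    have hbound : (⨆ n, b n) < (Order.succ lam).ord := by
      apply Ordinal.iSup_lt_ord_lift _ hb
      rw [Cardinal.mk_nat, Cardinal.lift_aleph0,
        (Cardinal.isRegular_succ hlaminf).cof_eq]
      exact hlaminf.trans_lt (Order.lt_succ lam)
    set β := ⨆ n, b n with hβ
    have := hbb (N β) β ⟨hbound, rfl⟩
    exact absurd (le_ciSup (Ordinal.bddAbove_range b) (N β)) (not_le.mpr this)
  obtain ⟨n, hD⟩ := hDn
  refine ⟨{α | α < (Order.succ lam).ord ∧ N α = n}, fun α hα => hα.1, hD, n, ?_⟩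
  intro α hα β hβ hαβ
  have hTα : Tset n α ∈ U := hα.2 ▸ hNspec α hα.1
  have hTβ : Tset n β ∈ U := hβ.2 ▸ hNspec β hβ.1
  obtain ⟨q, hqα, hqβ⟩ := Filter.nonempty_of_mem (Filter.inter_mem hTα hTβ)
  obtain ⟨hqα1, hqα2⟩ := hqα
  obtain ⟨hqβ1, hqβ2⟩ := hqβ
  set η := P β q with hη
  set ξ := P α q with hξ
  have hηlt : η < lam.ord := (hPspec β q hqβ1).1
  have hηq : lt (η, β) q.val := (hPspec β q hqβ1).2
  have hξq : lt (ξ, α) q.val := (hPspec α q hqα1).2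
  -- the unique predecessor of (η, β) at level α
  obtain ⟨ξ', hξ'⟩ := (hpred (η, β) hηlt (hβ.1) α hαβ).exists
  have hξ'q : lt (ξ', α) q.val := htrans hξ'.2 hηq
  have : ξ' = ξ := hPuniq α q hqα1 ξ' hξ'.1 hξ'q
  have hfin : lt (ξ, α) (η, β) := this ▸ hξ'.2
  exact ⟨ξ, hqα2, η, hqβ2, hfin⟩
end

section
/- Let λ be an infinite cardinal and let T be a tree of height λ⁺ whose underlying set is λ × λ⁺ and whose α-th level is λ × {α} for every α < λ⁺. Let ν < λ be an infinite cardinal, and let D ⊆ λ⁺ be unbounded such that for all α < β in D there are a ∈ ν × {α} and b ∈ ν × {β} with a <_T b. Suppose v is an ultrafilter on λ⁺ that is ν⁺-complete (closed under intersections of families of at most ν of its members), contains D, and contains every subset of λ⁺ whose complement is bounded in λ⁺. Then there are an unbounded set D′ ⊆ D and nodes a_α ∈ ν × {α} for α ∈ D′ that are pairwise comparable in T; in particular T has a chain of cardinality λ⁺. -/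
universe u

open Cardinal

lemma ultra_pigeon {X : Type w} (v : Ultrafilter X) (κ : Cardinal.{w})
    (hvc : ∀ s : Set (Set X), (∀ A ∈ s, A ∈ v) → #s ≤ κ → ⋂₀ s ∈ v)
    {I : Type w} (A : I → Set X) (hI : #I ≤ κ) (hU : (⋃ i, A i) ∈ v) :
    ∃ i, A i ∈ v := by
  by_contra h
  push_neg at h
  have hc : ∀ i, (A i)ᶜ ∈ v := fun i => Ultrafilter.compl_mem_iff_notMem.mpr (h i)
  have hint := hvc (Set.range fun i => (A i)ᶜ)
    (by rintro B ⟨i, rfl⟩; exact hc i) (Cardinal.mk_range_le.trans hI)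
  rw [Set.sInter_range] at hint
  have : (⋂ i, (A i)ᶜ) = (⋃ i, A i)ᶜ := (Set.compl_iUnion A).symm
  rw [this] at hint
  exact (Ultrafilter.compl_mem_iff_notMem.mp hint) hU

/-- Let `λ` be an infinite cardinal and `T` a tree of height `λ⁺` whose underlying set is
`λ × λ⁺` with `α`-th level `λ × {α}` (encoded as in the spine statement). Let `ν < λ` be an
infinite cardinal and `D ⊆ λ⁺` unbounded such that for all `α < β` in `D` some element of
`ν × {α}` lies `<_T`-below some element of `ν × {β}`. If `v` is a `ν⁺`-complete ultrafilter
on `λ⁺` containing `D` and every subset of `λ⁺` with bounded complement, then there are an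
unbounded `D′ ⊆ D` and nodes `a_α ∈ ν × {α}` for `α ∈ D′` that are pairwise comparable in
`T`; in particular `T` has a chain of cardinality `λ⁺`. -/
theorem spine_has_branch
    (lam : Cardinal.{u}) (hinf : ℵ₀ ≤ lam)
    (lt : Ordinal.{u} × Ordinal.{u} → Ordinal.{u} × Ordinal.{u} → Prop)
    (htrans : ∀ {p q r}, lt p q → lt q r → lt p r)
    (hdom : ∀ {p q}, lt p q →
      p.1 < lam.ord ∧ q.1 < lam.ord ∧ p.2 < q.2 ∧ q.2 < (Order.succ lam).ord)
    (hpred : ∀ q : Ordinal.{u} × Ordinal.{u}, q.1 < lam.ord → q.2 < (Order.succ lam).ord →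
      ∀ α < q.2, ∃! ξ : Ordinal.{u}, ξ < lam.ord ∧ lt (ξ, α) q)
    (nu : Cardinal.{u}) (hnuinf : ℵ₀ ≤ nu) (hnu : nu < lam)
    (D : Set Ordinal.{u}) (hD : ∀ α ∈ D, α < (Order.succ lam).ord)
    (hDunb : ∀ β < (Order.succ lam).ord, ∃ α ∈ D, β ≤ α)
    (hspine : ∀ α ∈ D, ∀ β ∈ D, α < β → ∃ ξ < nu.ord, ∃ η < nu.ord, lt (ξ, α) (η, β))
    (v : Ultrafilter {β : Ordinal.{u} // β < (Order.succ lam).ord})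
    (hvcomplete : ∀ s : Set (Set {β : Ordinal.{u} // β < (Order.succ lam).ord}),
      (∀ A ∈ s, A ∈ v) → #s ≤ Cardinal.lift.{u + 1} nu → ⋂₀ s ∈ v)
    (hvD : {x : {β : Ordinal.{u} // β < (Order.succ lam).ord} | (x : Ordinal.{u}) ∈ D} ∈ v)
    (hvcobounded : ∀ A : Set {β : Ordinal.{u} // β < (Order.succ lam).ord},
      (∃ γ < (Order.succ lam).ord,
        ∀ x : {β : Ordinal.{u} // β < (Order.succ lam).ord}, γ ≤ (x : Ordinal.{u}) → x ∈ A) →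
      A ∈ v) :
    ∃ D' ⊆ D, (∀ β < (Order.succ lam).ord, ∃ α ∈ D', β ≤ α) ∧
      ∃ f : Ordinal.{u} → Ordinal.{u}, (∀ α ∈ D', f α < nu.ord) ∧
        (∀ α ∈ D', ∀ β ∈ D', α < β → lt (f α, α) (f β, β) ∨ lt (f β, β) (f α, α)) ∧
        ∃ C : Set (Ordinal.{u} × Ordinal.{u}),
          (∀ p ∈ C, p.1 < lam.ord ∧ p.2 < (Order.succ lam).ord) ∧
          (∀ p ∈ C, ∀ q ∈ C, p ≠ q → lt p q ∨ lt q p) ∧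
          #C = Cardinal.lift.{u + 1} (Order.succ lam) := by
  classical
  have hLlim : Order.IsSuccLimit ((Order.succ lam).ord) := Cardinal.isSuccLimit_ord (hinf.trans (Order.le_succ lam))
  have hsuccinf : ℵ₀ ≤ Order.succ lam := hinf.trans (Order.le_succ lam)
  have hLlim : Order.IsSuccLimit (Order.succ lam).ord := Cardinal.isSuccLimit_ord hsuccinf
  have hnuord : nu.ord < lam.ord := Cardinal.ord_lt_ord.mpr hnu
  have hmkIio : #(Set.Iio nu.ord) = Cardinal.lift.{u + 1} nu := by
    rw [Ordinal.mk_Iio_ordinal, Cardinal.card_ord]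
  have haleph0lift : ℵ₀ ≤ Cardinal.lift.{u + 1} nu := Cardinal.aleph0_le_lift.mpr hnuinf
  -- Step 1: fix, for each α ∈ D, a pair (ξf α, ηf α) working for v-many β.
  have key1 : ∀ α, α ∈ D → ∃ ξ η : Ordinal.{u}, ξ < nu.ord ∧ η < nu.ord ∧
      {x : {β : Ordinal.{u} // β < (Order.succ lam).ord} | (x : Ordinal) ∈ D ∧ α < (x : Ordinal) ∧ lt (ξ, α) (η, (x : Ordinal))} ∈ v := by
    intro α hα
    set A : (Set.Iio nu.ord × Set.Iio nu.ord) → Set {β : Ordinal.{u} // β < (Order.succ lam).ord} := fun i =>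
      {x : {β : Ordinal.{u} // β < (Order.succ lam).ord} | (x : Ordinal) ∈ D ∧ α < (x : Ordinal) ∧
        lt ((i.1 : Ordinal), α) ((i.2 : Ordinal), (x : Ordinal))} with hA
    have hScob : {x : {β : Ordinal.{u} // β < (Order.succ lam).ord} | Order.succ α ≤ (x : Ordinal)} ∈ v :=
      hvcobounded _ ⟨Order.succ α, hLlim.succ_lt (hD α hα), fun x hx => hx⟩
    have hS : {x : {β : Ordinal.{u} // β < (Order.succ lam).ord} | (x : Ordinal) ∈ D ∧ α < (x : Ordinal)} ∈ v := by
      have := Filter.inter_mem (Ultrafilter.mem_coe.mpr hvD) (Ultrafilter.mem_coe.mpr hScob)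
      refine Ultrafilter.mem_coe.mp (Filter.mem_of_superset this ?_)
      rintro x ⟨h1, h2⟩
      exact ⟨h1, Order.succ_le_iff.mp h2⟩
    have hU : (⋃ i, A i) ∈ v := by
      refine Ultrafilter.mem_coe.mp
        (Filter.mem_of_superset (Ultrafilter.mem_coe.mpr hS) ?_)
      rintro x ⟨hx1, hx2⟩
      obtain ⟨ξ, hξ, η, hη, hlt⟩ := hspine α hα (x : Ordinal) hx1 hx2
      exact Set.mem_iUnion.mpr ⟨(⟨ξ, hξ⟩, ⟨η, hη⟩), hx1, hx2, hlt⟩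
    have hI : #(Set.Iio nu.ord × Set.Iio nu.ord) ≤ Cardinal.lift.{u + 1} nu := by
      rw [Cardinal.mk_prod, Cardinal.lift_id, hmkIio,
        Cardinal.mul_eq_self haleph0lift]
    obtain ⟨i, hi⟩ := ultra_pigeon v _ hvcomplete A hI hU
    exact ⟨i.1, i.2, i.1.2, i.2.2, hi⟩
  choose! ξf ηf h1 h2 h3 using key1
  -- Step 2: fix a single η* for v-many α.
  have key2 : ∃ η : Set.Iio nu.ord,
      {x : {β : Ordinal.{u} // β < (Order.succ lam).ord} | (x : Ordinal) ∈ D ∧ ηf (x : Ordinal) = (η : Ordinal)} ∈ v := by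
    refine ultra_pigeon v _ hvcomplete
      (fun η : Set.Iio nu.ord =>
        {x : {β : Ordinal.{u} // β < (Order.succ lam).ord} | (x : Ordinal) ∈ D ∧ ηf (x : Ordinal) = (η : Ordinal)})
      (le_of_eq hmkIio) ?_
    refine Ultrafilter.mem_coe.mp
      (Filter.mem_of_superset (Ultrafilter.mem_coe.mpr hvD) ?_)
    intro x hx
    exact Set.mem_iUnion.mpr ⟨⟨ηf (x : Ordinal), h2 _ hx⟩, hx, rfl⟩
  obtain ⟨ηstar, hP⟩ := key2
  set D' : Set Ordinal.{u} := {α | α ∈ D ∧ ηf α = (ηstar : Ordinal)} with hD'def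
  have hD'sub : D' ⊆ D := fun α hα => hα.1
  -- D' is unbounded.
  have hD'unb : ∀ β < (Order.succ lam).ord, ∃ α ∈ D', β ≤ α := by
    intro β hβ
    have hQ : {x : {β : Ordinal.{u} // β < (Order.succ lam).ord} | β ≤ (x : Ordinal)} ∈ v :=
      hvcobounded _ ⟨β, hβ, fun x hx => hx⟩
    have := Filter.inter_mem (Ultrafilter.mem_coe.mpr hP) (Ultrafilter.mem_coe.mpr hQ)
    obtain ⟨x, ⟨hx1, hx2⟩, hx3⟩ := Filter.nonempty_of_mem this
    exact ⟨(x : Ordinal), ⟨hx1, hx2⟩, hx3⟩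
  -- Comparability.
  have hcomp : ∀ α ∈ D', ∀ β ∈ D', α < β → lt (ξf α, α) (ξf β, β) := by
    intro α hα β hβ hαβ
    have hR : {x : {β : Ordinal.{u} // β < (Order.succ lam).ord} | Order.succ β ≤ (x : Ordinal)} ∈ v :=
      hvcobounded _ ⟨Order.succ β, hLlim.succ_lt (hD β hβ.1), fun x hx => hx⟩
    have hmem := Filter.inter_mem
      (Filter.inter_mem (Ultrafilter.mem_coe.mpr (h3 α hα.1))
        (Ultrafilter.mem_coe.mpr (h3 β hβ.1)))
      (Ultrafilter.mem_coe.mpr hR)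
    obtain ⟨x, ⟨⟨hxα, hxβ⟩, hxR⟩⟩ := Filter.nonempty_of_mem hmem
    have hβx : β < (x : Ordinal) := Order.succ_le_iff.mp hxR
    have hltα : lt (ξf α, α) ((ηstar : Ordinal), (x : Ordinal)) := by
      have := hxα.2.2; rwa [hα.2] at this
    have hltβ : lt (ξf β, β) ((ηstar : Ordinal), (x : Ordinal)) := by
      have := hxβ.2.2; rwa [hβ.2] at this
    obtain ⟨w, hw, hwu⟩ := hpred ((ηstar : Ordinal), (x : Ordinal))
      (lt_trans ηstar.2 hnuord) x.2 α (hαβ.trans hβx)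
    obtain ⟨ζ, ⟨hζ1, hζ2⟩, -⟩ := hpred (ξf β, β)
      (lt_trans (h1 β hβ.1) hnuord) (hD β hβ.1) α hαβ
    have e1 : ζ = w := hwu ζ ⟨hζ1, htrans hζ2 hltβ⟩
    have e2 : ξf α = w := hwu (ξf α) ⟨lt_trans (h1 α hα.1) hnuord, hltα⟩
    have e3 : ξf α = ζ := e2.trans e1.symm
    rw [e3]
    exact hζ2
  refine ⟨D', hD'sub, hD'unb, ξf, fun α hα => h1 α hα.1,
    fun α hα β hβ h => Or.inl (hcomp α hα β hβ h),
    (fun α => (ξf α, α)) '' D', ?_, ?_, ?_⟩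
  · rintro p ⟨α, hα, rfl⟩
    exact ⟨lt_trans (h1 α hα.1) hnuord, hD α hα.1⟩
  · rintro p ⟨α, hα, rfl⟩ q ⟨β, hβ, rfl⟩ hne
    rcases lt_trichotomy α β with h | h | h
    · exact Or.inl (hcomp α hα β hβ h)
    · exact absurd (by rw [h]) hne
    · exact Or.inr (hcomp β hβ α hα h)
  · -- cardinality
    have hinj : Set.InjOn (fun α => (ξf α, α)) D' := by
      intro a _ b _ h
      exact congrArg Prod.snd h
    rw [Cardinal.mk_image_eq_of_injOn _ _ hinj]
    have hle : #D' ≤ Cardinal.lift.{u + 1} (Order.succ lam) := by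
      have hsub : D' ⊆ Set.Iio (Order.succ lam).ord := fun α hα => hD α hα.1
      have := Cardinal.mk_le_mk_of_subset hsub
      rwa [Ordinal.mk_Iio_ordinal, Cardinal.card_ord] at this
    refine le_antisymm hle ?_
    by_contra hlt
    push_neg at hlt
    have hle2 : #D' ≤ Cardinal.lift.{u + 1} lam := by
      rw [Cardinal.lift_succ] at hlt
      exact Order.lt_succ_iff.mp hlt
    have hcover : Set.Iio (Order.succ lam).ord ⊆ ⋃ a : D', Set.Iic (a : Ordinal) := by
      intro β hβ
      obtain ⟨α, hα, hβα⟩ := hD'unb β hβ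
      exact Set.mem_iUnion.mpr ⟨⟨α, hα⟩, hβα⟩
    have hIic : ∀ a : D', #(Set.Iic (a : Ordinal)) ≤ Cardinal.lift.{u + 1} lam := by
      intro a
      have hsub : Set.Iic (a : Ordinal) ⊆ Set.Iio (Order.succ (a : Ordinal)) := by
        intro x hx
        exact Order.lt_succ_iff.mpr (Set.mem_Iic.mp hx)
      have h4 := (Cardinal.mk_le_mk_of_subset hsub).trans
        (le_of_eq (Ordinal.mk_Iio_ordinal _))
      have h5 : (Order.succ (a : Ordinal)).card ≤ lam := by
        have : Order.succ (a : Ordinal) < (Order.succ lam).ord := hLlim.succ_lt (hD _ (hD'sub a.2))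
        rw [Cardinal.lt_ord] at this
        exact Order.lt_succ_iff.mp this
      exact h4.trans (Cardinal.lift_le.mpr h5)
    have hbig : #(Set.Iio (Order.succ lam).ord) ≤ Cardinal.lift.{u + 1} lam := by
      calc #(Set.Iio (Order.succ lam).ord) ≤ #(⋃ a : D', Set.Iic (a : Ordinal)) :=
            Cardinal.mk_le_mk_of_subset hcover
        _ ≤ #D' * ⨆ a : D', #(Set.Iic (a : Ordinal)) := Cardinal.mk_iUnion_le _
        _ ≤ Cardinal.lift.{u + 1} lam * Cardinal.lift.{u + 1} lam :=
            mul_le_mul' hle2 (ciSup_le' hIic)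
        _ = Cardinal.lift.{u + 1} lam :=
            Cardinal.mul_eq_self (Cardinal.aleph0_le_lift.mpr hinf)
    rw [Ordinal.mk_Iio_ordinal, Cardinal.card_ord, Cardinal.lift_le] at hbig
    exact (Order.lt_succ lam).not_ge hbig
end

section
/- Let λ be a singular cardinal which is the limit of a strictly increasing sequence of strongly compact cardinals. Then every strong λ⁺-system whose index set has cardinality less than λ has a branch of cardinality λ⁺. -/
universe u

open Cardinal

/-- A `λ⁺`-system of width `τ` with index set `I`: an unbounded domain `D ⊆ λ⁺`, levels
`T_α ⊆ τ × {α}` for `α ∈ D` (a node of level `α` is a pair `(ξ, α)` with `ξ ∈ lev α`, where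
`lev α ⊆ τ`), and binary relations `rel i` (for `i : I`) relating only nodes of strictly
increasing levels, such that (1) any two levels contain some pair of related nodes, and
(2) if `(a,c)` and `(b,c)` stand in `rel i` with `level a < level b < level c`, then also
`(a,b)` stands in `rel i`. -/
structure LamSystem (lam tau : Cardinal.{u}) (I : Type u) where
  D : Set Ordinal.{u}
  lev : Ordinal.{u} → Set Ordinal.{u}
  rel : I → Ordinal.{u} × Ordinal.{u} → Ordinal.{u} × Ordinal.{u} → Prop
  D_lt : ∀ α ∈ D, α < (Order.succ lam).ord
  D_unbounded : ∀ β < (Order.succ lam).ord, ∃ α ∈ D, β ≤ α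
  lev_sub : ∀ α ∈ D, lev α ⊆ Set.Iio tau.ord
  rel_dom : ∀ i p q, rel i p q →
    p.2 ∈ D ∧ q.2 ∈ D ∧ p.2 < q.2 ∧ p.1 ∈ lev p.2 ∧ q.1 ∈ lev q.2
  rel_exists : ∀ α ∈ D, ∀ β ∈ D, α < β → ∃ ξ ∈ lev α, ∃ η ∈ lev β, ∃ i, rel i (ξ, α) (η, β)
  rel_coh : ∀ i p q r, p.2 < q.2 → rel i p r → rel i q r → rel i p q

/-- A system is strong if every node of a higher level has a related node at
each lower level. -/
def LamSystem.Strong {lam tau : Cardinal.{u}} {I : Type u} (S : LamSystem lam tau I) : Prop :=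
  ∀ α ∈ S.D, ∀ β ∈ S.D, α < β → ∀ η ∈ S.lev β, ∃ ξ ∈ S.lev α, ∃ i, S.rel i (ξ, α) (η, β)

/-- The system has a branch of cardinality `λ⁺`: a set of nodes of cardinality `λ⁺` any two
distinct members of which are related (in one order or the other) by a single relation. -/
def LamSystem.HasBranchOfCardSucc {lam tau : Cardinal.{u}} {I : Type u}
    (S : LamSystem lam tau I) : Prop :=
  ∃ i : I, ∃ B : Set (Ordinal.{u} × Ordinal.{u}),
    (∀ p ∈ B, p.2 ∈ S.D ∧ p.1 ∈ S.lev p.2) ∧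
    (∀ p ∈ B, ∀ q ∈ B, p ≠ q → S.rel i p q ∨ S.rel i q p) ∧
    #B = Cardinal.lift.{u + 1} (Order.succ lam)

namespace BranchProofAux

noncomputable section

/-- λ⁺ as an ordinal. -/
def Mu (lam : Cardinal.{u}) : Ordinal.{u} := (Order.succ lam).ord

/-- A `Type u` copy of the ordinals below `λ⁺`. -/
abbrev O (lam : Cardinal.{u}) : Type u := (Mu lam).ToType

/-- The ordinal corresponding to a point of `O lam`. -/
def ordOf (lam : Cardinal.{u}) (x : O lam) : Ordinal.{u} :=
  ((Ordinal.ToType.mk (o := Mu lam)).symm x : Ordinal)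

theorem ordOf_lt (lam : Cardinal.{u}) (x : O lam) : ordOf lam x < Mu lam :=
  ((Ordinal.ToType.mk (o := Mu lam)).symm x).2

theorem ordOf_inj (lam : Cardinal.{u}) : Function.Injective (ordOf lam) := by
  intro x y h
  have := Subtype.coe_injective (a₁ := (Ordinal.ToType.mk (o := Mu lam)).symm x)
    (a₂ := (Ordinal.ToType.mk (o := Mu lam)).symm y) h
  exact (Ordinal.ToType.mk (o := Mu lam)).symm.injective this

theorem exists_ordOf (lam : Cardinal.{u}) {a : Ordinal.{u}} (ha : a < Mu lam) :
    ∃ x : O lam, ordOf lam x = a := by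
  refine ⟨Ordinal.ToType.mk (o := Mu lam) ⟨a, ha⟩, ?_⟩
  simp [ordOf]

/-- Unboundedness for subsets of `O lam`. -/
def UnbO (lam : Cardinal.{u}) (A : Set (O lam)) : Prop :=
  ∀ a < Mu lam, ∃ x ∈ A, a ≤ ordOf lam x

theorem cof_Mu {lam : Cardinal.{u}} (hinf : ℵ₀ ≤ lam) : (Mu lam).cof = Order.succ lam :=
  (Cardinal.isRegular_succ hinf).cof_eq

theorem Mu_isLimit {lam : Cardinal.{u}} (hinf : ℵ₀ ≤ lam) : Order.IsSuccLimit (Mu lam) :=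
  Cardinal.isSuccLimit_ord (hinf.trans (Order.le_succ lam))

theorem card_of_UnbO {lam : Cardinal.{u}} (hinf : ℵ₀ ≤ lam) {A : Set (O lam)}
    (hA : UnbO lam A) : #A = Order.succ lam := by
  refine le_antisymm ?_ ?_
  · calc #A ≤ #(O lam) := Cardinal.mk_set_le A
      _ = (Mu lam).card := Cardinal.mk_toType _
      _ = Order.succ lam := Cardinal.card_ord _
  · have h1 : Ordinal.lsub (fun x : A => ordOf lam x.1) = Mu lam := by
      refine le_antisymm (Ordinal.lsub_le fun x => ordOf_lt lam x.1) ?_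
      by_contra hlt
      push_neg at hlt
      obtain ⟨x, hx, hax⟩ := hA _ hlt
      exact absurd (Ordinal.lt_lsub (fun x : A => ordOf lam x.1) ⟨x, hx⟩)
        (not_lt.mpr hax)
    calc Order.succ lam = (Mu lam).cof := (cof_Mu hinf).symm
      _ = (Ordinal.lsub (fun x : A => ordOf lam x.1)).cof := by rw [h1]
      _ ≤ #A := Ordinal.cof_lsub_le _

set_option linter.deprecated false in
theorem exists_complete_ultrafilter {lam : Cardinal.{u}} (hinf : ℵ₀ ≤ lam)
    {κ : Cardinal.{u}} (hκ : κ ≤ lam) (hsc : IsStronglyCompact κ)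
    {A : Set (O lam)} (hA : UnbO lam A) :
    ∃ U : Ultrafilter (O lam), (U : Filter (O lam)).IsCardComplete κ ∧
      ∀ a < Mu lam, {x | x ∈ A ∧ a ≤ ordOf lam x} ∈ U := by
  classical
  set F : Filter (O lam) :=
    { sets := {B | ∃ a, a < Mu lam ∧ {x | x ∈ A ∧ a ≤ ordOf lam x} ⊆ B}
      univ_sets := ⟨0, (Mu_isLimit hinf).pos, fun x _ => trivial⟩
      sets_of_superset := fun hB h => by
        obtain ⟨a, ha, hsub⟩ := hB
        exact ⟨a, ha, hsub.trans h⟩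
      inter_sets := fun hB hC => by
        obtain ⟨a, ha, hsa⟩ := hB
        obtain ⟨b, hb, hsb⟩ := hC
        refine ⟨max a b, max_lt ha hb, fun x hx => ⟨?_, ?_⟩⟩
        · exact hsa ⟨hx.1, (le_max_left a b).trans hx.2⟩
        · exact hsb ⟨hx.1, (le_max_right a b).trans hx.2⟩ } with hFdef
  have hmem : ∀ B : Set (O lam),
      B ∈ F ↔ ∃ a, a < Mu lam ∧ {x | x ∈ A ∧ a ≤ ordOf lam x} ⊆ B := fun B => Iff.rfl
  have hne : F.NeBot := by
    rw [Filter.neBot_iff]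
    intro hbot
    have hemp : (∅ : Set (O lam)) ∈ F := hbot ▸ Filter.mem_bot
    obtain ⟨a, ha, hsub⟩ := (hmem _).mp hemp
    obtain ⟨x, hx, hax⟩ := hA a ha
    exact hsub ⟨hx, hax⟩
  have hcomp : F.IsCardComplete κ := by
    intro s hs hcard
    have hch : ∀ B : s, ∃ a, a < Mu lam ∧ {x | x ∈ A ∧ a ≤ ordOf lam x} ⊆ (B : Set (O lam)) :=
      fun B => (hmem _).mp (hs B B.2)
    choose g hg1 hg2 using hch
    refine (hmem _).mpr ⟨iSup g, ?_, ?_⟩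
    · refine Ordinal.iSup_lt_of_lt_cof ?_ hg1
      rw [cof_Mu hinf]
      exact hcard.trans_le (hκ.trans (Order.le_succ lam))
    · intro x hx
      rw [Set.mem_sInter]
      intro B hB
      exact hg2 ⟨B, hB⟩ ⟨hx.1, (Ordinal.le_iSup g ⟨B, hB⟩).trans hx.2⟩
  obtain ⟨U, hle, hUc⟩ := hsc _ F hne hcomp
  exact ⟨U, hUc, fun a ha => Filter.le_def.mp hle _ ((hmem _).mpr ⟨a, ha, subset_rfl⟩)⟩

set_option linter.deprecated false in
theorem pigeonhole {lam : Cardinal.{u}} (hinf : ℵ₀ ≤ lam) {J : Type u}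
    (hJ : #J < Order.succ lam) {A : Set (O lam)} (hA : UnbO lam A) (g : O lam → J) :
    ∃ j, UnbO lam {x | x ∈ A ∧ g x = j} := by
  by_contra h
  push_neg at h
  have h' : ∀ j, ∃ a, a < Mu lam ∧ ∀ x, x ∈ A → g x = j → ordOf lam x < a := by
    intro j
    have hj := h j
    unfold UnbO at hj
    push_neg at hj
    obtain ⟨a, ha, hb⟩ := hj
    exact ⟨a, ha, fun x hx hgx => hb x ⟨hx, hgx⟩⟩
  choose av h1 h2 using h'
  have hsup : iSup av < Mu lam := by
    refine Ordinal.iSup_lt_of_lt_cof ?_ h1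
    rw [cof_Mu hinf]
    exact hJ
  obtain ⟨x, hx, hax⟩ := hA _ hsup
  exact absurd hax (not_le.mpr ((h2 (g x) x hx rfl).trans_le (Ordinal.le_iSup av (g x))))

theorem exists_stab {X : Type u} {κ : Cardinal.{u}} (U : Ultrafilter X)
    (hU : (U : Filter X).IsCardComplete κ) {J : Type u} (hJ : #J < κ) (g : X → J) :
    ∃ j, {x | g x = j} ∈ U := by
  by_contra h
  push_neg at h
  have hc : ∀ j, {x | g x ≠ j} ∈ U := by
    intro j
    have := Ultrafilter.compl_mem_iff_notMem.mpr (h j)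
    simpa [Set.compl_setOf] using this
  have hmemU : ⋂₀ (Set.range fun j => {x | g x ≠ j}) ∈ (U : Filter X) := by
    refine hU _ ?_ (Cardinal.mk_range_le.trans_lt hJ)
    rintro B ⟨j, rfl⟩
    exact hc j
  obtain ⟨x, hx⟩ := Ultrafilter.nonempty_of_mem hmemU
  exact (hx _ ⟨g x, rfl⟩) rfl

end

end BranchProofAux

open BranchProofAux in
/-- If `λ` is a singular cardinal which is the limit of a strictly increasing sequence of
strongly compact cardinals, then every strong `λ⁺`-system whose index set has cardinality
less than `λ` has a branch of cardinality `λ⁺`. -/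
theorem strong_system_has_branch
    (lam : Cardinal.{u}) (hinf : ℵ₀ ≤ lam) (hsing : lam.ord.cof < lam)
    (hlim : ∀ μ < lam, ∃ κ, μ < κ ∧ κ < lam ∧ IsStronglyCompact κ)
    (tau : Cardinal.{u}) (htau : tau ≤ lam)
    (I : Type u) (hI : #I < lam)
    (S : LamSystem lam tau I) (hS : S.Strong) :
    S.HasBranchOfCardSucc := by
  classical
  have hμlim : Order.IsSuccLimit (Mu lam) := Mu_isLimit hinf
  have haleph0_lt : ℵ₀ < lam :=
    lt_of_le_of_lt (Ordinal.aleph0_le_cof.mpr (Cardinal.isSuccLimit_ord hinf)) hsing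
  have hsucc1 : ∀ {a b : Ordinal.{u}}, a + 1 ≤ b ↔ a < b := by
    intro a b
    rw [Ordinal.add_one_eq_succ]
    exact Order.succ_le_iff
  have hsucc2 : ∀ {a : Ordinal.{u}}, a < Mu lam → a + 1 < Mu lam := by
    intro a ha
    rw [Ordinal.add_one_eq_succ]
    exact hμlim.succ_lt ha
  -- the domain as a subset of `O lam`
  set D' : Set (O lam) := {x | ordOf lam x ∈ S.D} with hD'def
  have hD'unb : UnbO lam D' := by
    intro a ha
    obtain ⟨α, hα, haα⟩ := S.D_unbounded a ha
    obtain ⟨x, hxa⟩ := exists_ordOf lam (S.D_lt α hα)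
    exact ⟨x, by rw [hD'def, Set.mem_setOf_eq, hxa]; exact hα, by rw [hxa]; exact haα⟩
  -- nonempty levels and a default index
  have hlevne : ∀ β ∈ S.D, (S.lev β).Nonempty := by
    intro β hβ
    obtain ⟨γ, hγ, hβγ⟩ := S.D_unbounded (β + 1) (hsucc2 (S.D_lt β hβ))
    obtain ⟨ξ, hξ, -⟩ := S.rel_exists β hβ γ hγ (lt_of_lt_of_le (hsucc1.mp le_rfl) hβγ)
    exact ⟨ξ, hξ⟩
  have hIne : Nonempty I := by
    obtain ⟨β, hβ, -⟩ := S.D_unbounded 0 hμlim.pos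
    obtain ⟨γ, hγ, hβγ⟩ := S.D_unbounded (β + 1) (hsucc2 (S.D_lt β hβ))
    obtain ⟨-, -, -, -, i, -⟩ := S.rel_exists β hβ γ hγ (lt_of_lt_of_le (hsucc1.mp le_rfl) hβγ)
    exact ⟨i⟩
  -- choose a distinguished node on each level
  have hbex : ∀ β : Ordinal.{u}, ∃ ξ, β ∈ S.D → ξ ∈ S.lev β := by
    intro β
    by_cases hβ : β ∈ S.D
    · obtain ⟨ξ, hξ⟩ := hlevne β hβ
      exact ⟨ξ, fun _ => hξ⟩
    · exact ⟨0, fun hc => absurd hc hβ⟩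
  choose b hb using hbex
  -- cofinal sequence in lam.ord
  obtain ⟨ι, fseq, hlsub, hιcard⟩ := Ordinal.exists_lsub_cof lam.ord
  have hι_ne : Nonempty ι := by
    have hpos : (0 : Ordinal) < Ordinal.lsub fseq := by
      rw [hlsub]
      exact (Cardinal.isSuccLimit_ord hinf).pos
    obtain ⟨i, -⟩ := Ordinal.lt_lsub_iff.mp hpos
    exact ⟨i⟩
  have hcwex : ∀ ξ : Ordinal.{u}, ∃ c : ι, ξ < lam.ord → ξ ≤ fseq c := by
    intro ξ
    by_cases hξ : ξ < lam.ord
    · obtain ⟨c, hc⟩ := Ordinal.lt_lsub_iff.mp (by rw [hlsub]; exact hξ)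
      exact ⟨c, fun _ => hc⟩
    · exact ⟨Classical.arbitrary ι, fun hc => absurd hc hξ⟩
  choose cw hcw using hcwex
  -- first strongly compact cardinal
  have hμ₁lt : max (max #I lam.ord.cof) ℵ₀ < lam := max_lt (max_lt hI hsing) haleph0_lt
  obtain ⟨κ₁, hκ₁gt, hκ₁lt, hκ₁sc⟩ := hlim _ hμ₁lt
  have hκ₁inf : ℵ₀ ≤ κ₁ := ((le_max_right _ _).trans_lt hκ₁gt).le
  obtain ⟨U₁, hU₁c, hU₁gen⟩ := exists_complete_ultrafilter hinf hκ₁lt.le hκ₁sc hD'unb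
  -- step-1 witnesses, by strength
  set P : Ordinal.{u} → O lam → Prop :=
    fun α x => α ∈ S.D ∧ ordOf lam x ∈ S.D ∧ α < ordOf lam x with hPdef
  have hwit : ∀ (α : Ordinal.{u}) (x : O lam), ∃ (ξ : Ordinal.{u}) (i : I),
      P α x → ξ ∈ S.lev α ∧ S.rel i (ξ, α) (b (ordOf lam x), ordOf lam x) := by
    intro α x
    by_cases h : P α x
    · obtain ⟨ξ, hξ, i, hrel⟩ := hS α h.1 _ h.2.1 h.2.2 (b (ordOf lam x)) (hb _ h.2.1)
      exact ⟨ξ, i, fun _ => ⟨hξ, hrel⟩⟩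
    · exact ⟨0, Classical.arbitrary I, fun hc => absurd hc h⟩
  choose ξw iw hw using hwit
  -- stabilize over the ultrafilter, for each level α
  have hJ₁ : #(I × ι) < κ₁ := by
    have : #(I × ι) = #I * #ι := by
      simp only [Cardinal.mk_prod, Cardinal.lift_id]
    rw [this]
    refine Cardinal.mul_lt_of_lt hκ₁inf ?_ ?_
    · exact ((le_max_left _ _).trans (le_max_left _ _)).trans_lt hκ₁gt
    · rw [hιcard]
      exact ((le_max_right _ _).trans (le_max_left _ _)).trans_lt hκ₁gt
  have hstab : ∀ α : Ordinal.{u}, ∃ j : I × ι,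
      {x | (iw α x, cw (ξw α x)) = j} ∈ U₁ :=
    fun α => exists_stab U₁ hU₁c hJ₁ _
  choose jf hjf using hstab
  -- pigeonhole over levels
  have hJ₁' : #(I × ι) < Order.succ lam :=
    hJ₁.trans (hκ₁lt.trans (Order.lt_succ lam))
  obtain ⟨⟨istar, cstar⟩, hEunb⟩ :=
    pigeonhole hinf hJ₁' hD'unb (fun x => jf (ordOf lam x))
  set E : Set (O lam) := {x | x ∈ D' ∧ jf (ordOf lam x) = (istar, cstar)} with hEdef
  -- the uniform bound for the derived narrow system
  set ρ : Ordinal.{u} := fseq cstar + 1 with hρdef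
  have hρlt : ρ < lam.ord := by
    rw [hρdef, Ordinal.add_one_eq_succ]
    exact (Cardinal.isSuccLimit_ord hinf).succ_lt (by rw [← hlsub]; exact Ordinal.lt_lsub fseq cstar)
  have hρcard : ρ.card < lam := Cardinal.lt_ord.mp hρlt
  have hρpos : (0 : Ordinal) < ρ := by
    rw [hρdef]
    exact lt_of_le_of_lt (zero_le (a := fseq cstar)) (by rw [Ordinal.add_one_eq_succ]; exact Order.lt_succ _)
  -- the derived relation: any two levels of E contain an `istar`-related pair below ρ
  have hder : ∀ y ∈ E, ∀ z ∈ E, ordOf lam y < ordOf lam z →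
      ∃ ξ η, ξ < ρ ∧ η < ρ ∧ S.rel istar (ξ, ordOf lam y) (η, ordOf lam z) := by
    intro y hy z hz hyz
    obtain ⟨hyD', hyj⟩ := hy
    obtain ⟨hzD', hzj⟩ := hz
    have htail : {x | x ∈ D' ∧ ordOf lam z + 1 ≤ ordOf lam x} ∈ U₁ :=
      hU₁gen _ (hsucc2 (ordOf_lt lam z))
    have hmem := Filter.inter_mem (Filter.inter_mem (hjf (ordOf lam y)) (hjf (ordOf lam z))) htail
    obtain ⟨x, ⟨hx1, hx2⟩, hx3⟩ := Ultrafilter.nonempty_of_mem hmem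
    have hzx : ordOf lam z < ordOf lam x := hsucc1.mp hx3.2
    have hP1 : P (ordOf lam y) x := ⟨hyD', hx3.1, hyz.trans hzx⟩
    have hP2 : P (ordOf lam z) x := ⟨hzD', hx3.1, hzx⟩
    obtain ⟨hξ1lev, hrel1⟩ := hw (ordOf lam y) x hP1
    obtain ⟨hξ2lev, hrel2⟩ := hw (ordOf lam z) x hP2
    have hx1' : (iw (ordOf lam y) x, cw (ξw (ordOf lam y) x)) = (istar, cstar) := by
      rw [Set.mem_setOf_eq] at hx1; rw [hx1, hyj]
    have hx2' : (iw (ordOf lam z) x, cw (ξw (ordOf lam z) x)) = (istar, cstar) := by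
      rw [Set.mem_setOf_eq] at hx2; rw [hx2, hzj]
    rw [Prod.mk.injEq] at hx1' hx2'
    obtain ⟨hi1, hc1⟩ := hx1'
    obtain ⟨hi2, hc2⟩ := hx2'
    have hrel1' : S.rel istar (ξw (ordOf lam y) x, ordOf lam y)
        (b (ordOf lam x), ordOf lam x) := hi1 ▸ hrel1
    have hrel2' : S.rel istar (ξw (ordOf lam z) x, ordOf lam z)
        (b (ordOf lam x), ordOf lam x) := hi2 ▸ hrel2
    have hcohrel := S.rel_coh istar (ξw (ordOf lam y) x, ordOf lam y)
      (ξw (ordOf lam z) x, ordOf lam z) (b (ordOf lam x), ordOf lam x) hyz hrel1' hrel2'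
    have hbound : ∀ (α : Ordinal.{u}), α ∈ S.D → ∀ ξ, ξ ∈ S.lev α →
        cw ξ = cstar → ξ < ρ := by
      intro α hα ξ hξ hcs
      have hξτ : ξ < tau.ord := S.lev_sub α hα hξ
      have hxilam : ξ < lam.ord := hξτ.trans_le (Cardinal.ord_le_ord.mpr htau)
      have := hcw ξ hxilam
      rw [hcs] at this
      calc ξ ≤ fseq cstar := this
        _ < ρ := by rw [hρdef, Ordinal.add_one_eq_succ]; exact Order.lt_succ _
    refine ⟨ξw (ordOf lam y) x, ξw (ordOf lam z) x, ?_, ?_, hcohrel⟩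
    · exact hbound _ hyD' _ hξ1lev hc1
    · exact hbound _ hzD' _ hξ2lev hc2
  -- second strongly compact cardinal
  have hμ₂lt : max ρ.card ℵ₀ < lam := max_lt hρcard haleph0_lt
  obtain ⟨κ₂, hκ₂gt, hκ₂lt, hκ₂sc⟩ := hlim _ hμ₂lt
  have hκ₂inf : ℵ₀ ≤ κ₂ := ((le_max_right _ _).trans_lt hκ₂gt).le
  obtain ⟨U₂, hU₂c, hU₂gen⟩ := exists_complete_ultrafilter hinf hκ₂lt.le hκ₂sc hEunb
  -- encoding of ordinals below ρ into a `Type u` set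
  set tt : Type u := ρ.ToType with httdef
  set iso2 := Ordinal.ToType.mk (o := ρ) with hiso2def
  set enc : Ordinal.{u} → tt := fun ξ => if h : ξ < ρ then iso2 ⟨ξ, h⟩ else iso2 ⟨0, hρpos⟩
    with hencdef
  set dec : tt → Ordinal.{u} := fun t => (iso2.symm t : Ordinal) with hdecdef
  have hdec_enc : ∀ ξ : Ordinal.{u}, ξ < ρ → dec (enc ξ) = ξ := by
    intro ξ hξ
    rw [hencdef, hdecdef]
    simp [hξ]
  -- step-2 witnesses
  set Q : O lam → O lam → Prop :=
    fun y x => y ∈ E ∧ x ∈ E ∧ ordOf lam y < ordOf lam x with hQdef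
  have hwit2 : ∀ y x : O lam, ∃ ξ η : Ordinal.{u},
      Q y x → ξ < ρ ∧ η < ρ ∧ S.rel istar (ξ, ordOf lam y) (η, ordOf lam x) := by
    intro y x
    by_cases h : Q y x
    · obtain ⟨ξ, η, h1, h2, h3⟩ := hder y h.1 x h.2.1 h.2.2
      exact ⟨ξ, η, fun _ => ⟨h1, h2, h3⟩⟩
    · exact ⟨0, 0, fun hc => absurd hc h⟩
  choose ξ2 η2 hw2 using hwit2
  have hJ₂ : #(tt × tt) < κ₂ := by
    have : #(tt × tt) = ρ.card * ρ.card := by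
      simp only [Cardinal.mk_prod, Cardinal.lift_id, httdef, Cardinal.mk_toType]
    rw [this]
    refine Cardinal.mul_lt_of_lt hκ₂inf ?_ ?_ <;>
      exact (le_max_left _ _).trans_lt hκ₂gt
  have hstab2 : ∀ y : O lam, ∃ j : tt × tt,
      {x | (enc (ξ2 y x), enc (η2 y x)) = j} ∈ U₂ :=
    fun y => exists_stab U₂ hU₂c hJ₂ _
  choose j2 hj2 using hstab2
  -- pigeonhole on the stabilized target node
  have hJ₂' : #tt < Order.succ lam := by
    rw [httdef, Cardinal.mk_toType]
    exact hρcard.trans (Order.lt_succ lam)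
  obtain ⟨ηt, hE2unb⟩ := pigeonhole hinf hJ₂' hEunb (fun y => (j2 y).2)
  set E2 : Set (O lam) := {y | y ∈ E ∧ (j2 y).2 = ηt} with hE2def
  set Xi : O lam → Ordinal.{u} := fun y => dec (j2 y).1 with hXidef
  set ηo : Ordinal.{u} := dec ηt with hηodef
  -- the key property: a U₂-large set of common targets for each y in E2
  have hkey : ∀ y ∈ E2, ∃ T, T ∈ U₂ ∧ ∀ x ∈ T,
      S.rel istar (Xi y, ordOf lam y) (ηo, ordOf lam x) := by
    intro y hy
    obtain ⟨hyE, hyη⟩ := hy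
    refine ⟨{x | (enc (ξ2 y x), enc (η2 y x)) = j2 y} ∩
      {x | x ∈ E ∧ ordOf lam y + 1 ≤ ordOf lam x}, ?_, ?_⟩
    · exact Filter.inter_mem (hj2 y) (hU₂gen _ (hsucc2 (ordOf_lt lam y)))
    · rintro x ⟨hx1, hx2⟩
      have hQyx : Q y x := ⟨hyE, hx2.1, hsucc1.mp hx2.2⟩
      obtain ⟨hξρ, hηρ, hrel⟩ := hw2 y x hQyx
      rw [Set.mem_setOf_eq] at hx1
      obtain ⟨he1, he2⟩ := Prod.ext_iff.mp hx1
      have hXiy : Xi y = ξ2 y x := by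
        rw [hXidef]; dsimp only; rw [← he1, hdec_enc _ hξρ]
      have hηoy : ηo = η2 y x := by
        rw [hηodef, ← hyη, ← he2, hdec_enc _ hηρ]
      rw [hXiy, hηoy]
      exact hrel
  -- node membership
  have hnode : ∀ y ∈ E2, ordOf lam y ∈ S.D ∧ Xi y ∈ S.lev (ordOf lam y) := by
    intro y hy
    obtain ⟨T, hT, hrel⟩ := hkey y hy
    obtain ⟨x, hx⟩ := Ultrafilter.nonempty_of_mem hT
    have := S.rel_dom istar _ _ (hrel x hx)
    exact ⟨this.1, this.2.2.2.1⟩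
  -- pairwise relation
  have hpair : ∀ y ∈ E2, ∀ z ∈ E2, ordOf lam y < ordOf lam z →
      S.rel istar (Xi y, ordOf lam y) (Xi z, ordOf lam z) := by
    intro y hy z hz hyz
    obtain ⟨Ty, hTy, hrely⟩ := hkey y hy
    obtain ⟨Tz, hTz, hrelz⟩ := hkey z hz
    obtain ⟨x, hxy, hxz⟩ := Ultrafilter.nonempty_of_mem (Filter.inter_mem hTy hTz)
    exact S.rel_coh istar (Xi y, ordOf lam y) (Xi z, ordOf lam z) (ηo, ordOf lam x) hyz
      (hrely x hxy) (hrelz x hxz)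
  -- assemble the branch
  refine ⟨istar, (fun y : O lam => ((Xi y, ordOf lam y) : Ordinal.{u} × Ordinal.{u})) '' E2,
    ?_, ?_, ?_⟩
  · rintro p ⟨y, hy, rfl⟩
    exact hnode y hy
  · rintro p ⟨y, hy, rfl⟩ q ⟨z, hz, rfl⟩ hne
    rcases lt_trichotomy (ordOf lam y) (ordOf lam z) with h | h | h
    · exact Or.inl (hpair y hy z hz h)
    · exact absurd (by rw [ordOf_inj lam h]) hne
    · exact Or.inr (hpair z hz y hy h)
  · have hinj : Function.Injective
        (fun y : O lam => ((Xi y, ordOf lam y) : Ordinal.{u} × Ordinal.{u})) := by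
      intro y z h
      exact ordOf_inj lam (congrArg Prod.snd h)
    have himg := Cardinal.mk_image_eq_lift
      (fun y : O lam => ((Xi y, ordOf lam y) : Ordinal.{u} × Ordinal.{u})) E2 hinj
    rw [Cardinal.lift_id'.{u, u + 1}] at himg
    rw [himg, card_of_UnbO hinf hE2unb]
end

section
/- Let λ be a singular cardinal which is the limit of a strictly increasing sequence of strongly compact cardinals. Then every narrow λ⁺-system (that is, one of width less than λ and with index set of cardinality less than λ) has a branch of cardinality λ⁺. -/
universe u

open Cardinal

section Aux

open Cardinal Set

/-- If a `U`-large set is covered by fewer than `κ` pieces and `U` is `κ`-complete,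
then one of the pieces is `U`-large. -/
lemma piece_mem_of_cover {X : Type u} {κ : Cardinal.{u}} (U : Ultrafilter X)
    (hU : (U : Filter X).IsCardComplete κ) {J : Type u} (hJ : #J < κ)
    (B : J → Set X) (A : Set X) (hA : A ∈ U) (hAB : A ⊆ ⋃ j, B j) :
    ∃ j, B j ∈ U := by
  by_contra h
  push_neg at h
  have hc : ∀ j, (B j)ᶜ ∈ U := fun j => (Ultrafilter.compl_mem_iff_notMem).2 (h j)
  have hs : #(Set.range fun j => (B j)ᶜ) < κ := lt_of_le_of_lt Cardinal.mk_range_le hJ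
  have h1 : ⋂₀ (Set.range fun j => (B j)ᶜ) ∈ (U : Filter X) := by
    refine hU _ ?_ hs
    rintro A ⟨j, rfl⟩
    exact hc j
  have h2 : (A ∩ ⋂₀ (Set.range fun j => (B j)ᶜ)).Nonempty :=
    Ultrafilter.nonempty_of_mem (Filter.inter_mem hA h1)
  obtain ⟨x, hxA, hxs⟩ := h2
  obtain ⟨j, hj⟩ := Set.mem_iUnion.1 (hAB hxA)
  exact (hxs _ ⟨j, rfl⟩) hj

end Aux

/-- If `λ` is a singular cardinal which is the limit of a strictly increasing sequence of
strongly compact cardinals, then every narrow `λ⁺`-system (one of width less than `λ` whose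
index set has cardinality less than `λ`) has a branch of cardinality `λ⁺`. -/

theorem narrow_system_has_branch
    (lam : Cardinal.{u}) (hinf : ℵ₀ ≤ lam) (hsing : lam.ord.cof < lam)
    (hlim : ∀ μ < lam, ∃ κ, μ < κ ∧ κ < lam ∧ IsStronglyCompact κ)
    (tau : Cardinal.{u}) (htau : tau < lam)
    (I : Type u) (hI : #I < lam)
    (S : LamSystem lam tau I) :
    S.HasBranchOfCardSucc := by
  classical
  set μ : Ordinal.{u} := (Order.succ lam).ord with hμdef
  have hsuccinf : ℵ₀ ≤ Order.succ lam := hinf.trans (Order.le_succ lam)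
  have hreg : (Order.succ lam).IsRegular := Cardinal.isRegular_succ hinf
  have hcof : μ.cof = Order.succ lam := hreg.cof_eq
  have hμlim : Order.IsSuccLimit μ := Cardinal.isSuccLimit_ord hsuccinf
  have haleph0lt : ℵ₀ < lam :=
    lt_of_le_of_lt (Ordinal.aleph0_le_cof.2 (Cardinal.isSuccLimit_ord hinf)) hsing
  -- choose a strongly compact κ above max(τ, #I, ℵ₀)
  set ν : Cardinal.{u} := max (max tau #I) ℵ₀ with hνdef
  have hνlam : ν < lam := max_lt (max_lt htau hI) haleph0lt
  have hνinf : ℵ₀ ≤ ν := le_max_right _ _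
  obtain ⟨κ, hνκ, hκlam, hκsc⟩ := hlim ν hνlam
  have hκinf : ℵ₀ ≤ κ := hνinf.trans hνκ.le
  have htauκ : tau < κ := lt_of_le_of_lt ((le_max_left tau #I).trans (le_max_left _ ℵ₀)) hνκ
  have hIκ : #I < κ := lt_of_le_of_lt ((le_max_right tau #I).trans (le_max_left _ ℵ₀)) hνκ
  -- the underlying type of order type λ⁺
  set X : Type u := μ.ToType with hXdef
  set e : Set.Iio μ ≃o X := Ordinal.ToType.mk with hedef
  set back : X → Ordinal.{u} := fun x => ((e.symm x : Set.Iio μ) : Ordinal.{u}) with hbackdef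
  have back_lt : ∀ x, back x < μ := fun x => (e.symm x).2
  have back_e : ∀ (α : Ordinal.{u}) (h : α < μ), back (e ⟨α, h⟩) = α := by
    intro α h
    simp [hbackdef]
  -- the tail-of-D filter
  set F : Filter X :=
    { sets := {A | ∃ γ < μ, ∀ x, back x ∈ S.D → γ ≤ back x → x ∈ A}
      univ_sets := ⟨0, hμlim.pos, fun x _ _ => trivial⟩
      sets_of_superset := by
        rintro A B ⟨γ, hγ, h⟩ hAB
        exact ⟨γ, hγ, fun x h1 h2 => hAB (h x h1 h2)⟩
      inter_sets := by
        rintro A B ⟨γ1, hγ1, h1⟩ ⟨γ2, hγ2, h2⟩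
        exact ⟨max γ1 γ2, max_lt hγ1 hγ2, fun x hx hle =>
          ⟨h1 x hx ((le_max_left _ _).trans hle), h2 x hx ((le_max_right _ _).trans hle)⟩⟩ }
      with hFdef
  have memF : ∀ A : Set X, A ∈ F ↔ ∃ γ < μ, ∀ x, back x ∈ S.D → γ ≤ back x → x ∈ A := by
    intro A; rfl
  have hFne : F.NeBot := by
    rw [← Filter.forall_mem_nonempty_iff_neBot]
    intro A hA
    obtain ⟨γ, hγ, h⟩ := (memF A).1 hA
    obtain ⟨α, hαD, hγα⟩ := S.D_unbounded γ hγ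
    have hαμ : α < μ := S.D_lt α hαD
    refine ⟨e ⟨α, hαμ⟩, h _ ?_ ?_⟩
    · rw [back_e α hαμ]; exact hαD
    · rw [back_e α hαμ]; exact hγα
  have hFcomp : F.IsCardComplete κ := by
    intro s hs hcard
    have hex : ∀ A : s, ∃ γ < μ, ∀ x, back x ∈ S.D → γ ≤ back x → x ∈ (A : Set X) :=
      fun A => (memF A).1 (hs A A.2)
    choose γ hγμ hγ using hex
    have hsup : (⨆ A, γ A) < μ := by
      refine Ordinal.iSup_lt_ord ?_ hγμ
      rw [hcof]
      exact (hcard.trans hκlam).trans (Order.lt_succ lam)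
    refine (memF _).2 ⟨_, hsup, fun x hx hle => ?_⟩
    rw [Set.mem_sInter]
    intro A hA
    exact hγ ⟨A, hA⟩ x hx ((le_ciSup (Ordinal.bddAbove_range γ) ⟨A, hA⟩).trans hle)
  obtain ⟨U, hUF, hUc⟩ := hκsc X F hFne hFcomp
  -- I is nonempty
  obtain ⟨α₀, hα₀D, -⟩ := S.D_unbounded 0 hμlim.pos
  obtain ⟨β₀, hβ₀D, hβ₀⟩ := S.D_unbounded (Order.succ α₀) (hμlim.succ_lt (S.D_lt _ hα₀D))
  have hα₀β₀ : α₀ < β₀ := (Order.lt_succ α₀).trans_le hβ₀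
  obtain ⟨-, -, -, -, i₀, -⟩ := S.rel_exists α₀ hα₀D β₀ hβ₀D hα₀β₀
  haveI : Nonempty I := ⟨i₀⟩
  -- witness triples
  have hwex : ∀ α β : Ordinal.{u}, ∃ t : Ordinal.{u} × Ordinal.{u} × I,
      α ∈ S.D → β ∈ S.D → α < β → S.rel t.2.2 (t.1, α) (t.2.1, β) := by
    intro α β
    by_cases h : α ∈ S.D ∧ β ∈ S.D ∧ α < β
    · obtain ⟨ξ, hξ, η, hη, i, hrel⟩ := S.rel_exists α h.1 β h.2.1 h.2.2
      exact ⟨(ξ, η, i), fun _ _ _ => hrel⟩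
    · exact ⟨(0, 0, Classical.arbitrary I), fun h1 h2 h3 => absurd ⟨h1, h2, h3⟩ h⟩
  choose w hw using hwex
  -- small index type enumerating possible triples
  set J : Type u := tau.ord.ToType × tau.ord.ToType × I with hJdef
  set eτ : Set.Iio tau.ord ≃o tau.ord.ToType := Ordinal.ToType.mk with heτdef
  set t : J → Ordinal.{u} × Ordinal.{u} × I :=
    fun j => (((eτ.symm j.1 : Set.Iio tau.ord) : Ordinal.{u}),
      ((eτ.symm j.2.1 : Set.Iio tau.ord) : Ordinal.{u}), j.2.2) with htdef
  have hJcard : #J < κ := by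
    have h1 : #J = tau * (tau * #I) := by
      simp [hJdef, Cardinal.mk_prod, Cardinal.mk_toType, Cardinal.card_ord]
    rw [h1]
    exact Cardinal.mul_lt_of_lt hκinf htauκ (Cardinal.mul_lt_of_lt hκinf htauκ hIκ)
  have ht : ∀ p : Ordinal.{u} × Ordinal.{u} × I, p.1 < tau.ord → p.2.1 < tau.ord →
      ∃ j, t j = p := by
    rintro ⟨a, b, i⟩ ha hb
    refine ⟨(eτ ⟨a, ha⟩, eτ ⟨b, hb⟩, i), ?_⟩
    simp [htdef]
  -- tails belong to U
  have hT : ∀ α ∈ S.D, {x : X | back x ∈ S.D ∧ α < back x} ∈ (U : Filter X) := by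
    intro α hα
    refine hUF ((memF _).2 ⟨Order.succ α, hμlim.succ_lt (S.D_lt α hα), fun x h1 h2 => ?_⟩)
    exact ⟨h1, (Order.succ_le_iff).1 h2⟩
  -- stabilize the witness triple on a U-large set, for each α ∈ D
  have htri : ∀ α : Ordinal.{u}, ∃ p : Ordinal.{u} × Ordinal.{u} × I,
      α ∈ S.D → {x : X | back x ∈ S.D ∧ α < back x ∧ w α (back x) = p} ∈ (U : Filter X) := by
    intro α
    by_cases hα : α ∈ S.D
    · have hcov : {x : X | back x ∈ S.D ∧ α < back x} ⊆
          ⋃ j, {x : X | back x ∈ S.D ∧ α < back x ∧ w α (back x) = t j} := by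
        rintro x ⟨h1, h2⟩
        have hrel := hw α (back x) hα h1 h2
        have hdom := S.rel_dom _ _ _ hrel
        have hξ : (w α (back x)).1 < tau.ord := S.lev_sub α hα hdom.2.2.2.1
        have hη : (w α (back x)).2.1 < tau.ord := S.lev_sub _ h1 hdom.2.2.2.2
        obtain ⟨j, hj⟩ := ht _ hξ hη
        exact Set.mem_iUnion.2 ⟨j, h1, h2, hj.symm⟩
      obtain ⟨j, hjU⟩ := piece_mem_of_cover U hUc hJcard _ _ (hT α hα) hcov
      exact ⟨t j, fun _ => hjU⟩
    · exact ⟨(0, 0, Classical.arbitrary I), fun h => absurd h hα⟩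
  choose tri htri using htri
  -- components of tri α
  have hcomp : ∀ α ∈ S.D, (tri α).1 ∈ S.lev α ∧ (tri α).1 < tau.ord ∧ (tri α).2.1 < tau.ord := by
    intro α hα
    obtain ⟨x, h1, h2, h3⟩ := Ultrafilter.nonempty_of_mem (htri α hα)
    have hrel := hw α (back x) hα h1 h2
    rw [h3] at hrel
    have hdom := S.rel_dom _ _ _ hrel
    exact ⟨hdom.2.2.2.1, S.lev_sub α hα hdom.2.2.2.1, S.lev_sub _ h1 hdom.2.2.2.2⟩
  -- there is an unbounded fiber
  have hfib : ∃ j : J, ∀ γ < μ, ∃ α, (α ∈ S.D ∧ tri α = t j) ∧ γ ≤ α := by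
    by_contra h
    push_neg at h
    choose γ hγμ hγ using h
    have hsup : (⨆ j, γ j) < μ := by
      refine Ordinal.iSup_lt_ord ?_ hγμ
      rw [hcof]
      exact (hJcard.trans hκlam).trans (Order.lt_succ lam)
    obtain ⟨α, hαD, hα⟩ := S.D_unbounded _ hsup
    obtain ⟨j, hj⟩ := ht (tri α) (hcomp α hαD).2.1 (hcomp α hαD).2.2
    exact absurd ((le_ciSup (Ordinal.bddAbove_range γ) j).trans hα)
      (hγ j α ⟨hαD, hj.symm⟩).not_ge
  obtain ⟨j₀, hE⟩ := hfib
  set ξ₀ : Ordinal.{u} := (t j₀).1 with hξ₀def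
  set η₀ : Ordinal.{u} := (t j₀).2.1 with hη₀def
  set i₁ : I := (t j₀).2.2 with hi₁def
  set E : Set Ordinal.{u} := {α | α ∈ S.D ∧ tri α = t j₀} with hEdef
  -- the key coherence step
  have hkey : ∀ α ∈ E, ∀ α' ∈ E, α < α' → S.rel i₁ (ξ₀, α) (ξ₀, α') := by
    intro α hα α' hα' hlt
    have h1 := htri α hα.1
    have h2 := htri α' hα'.1
    obtain ⟨x, hx1, hx2⟩ := Ultrafilter.nonempty_of_mem (Filter.inter_mem h1 h2)
    obtain ⟨hxD, hxα, hxw⟩ := hx1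
    obtain ⟨-, hxα', hxw'⟩ := hx2
    have r1 : S.rel i₁ (ξ₀, α) (η₀, back x) := by
      have := hw α (back x) hα.1 hxD hxα
      rw [hxw, hα.2] at this
      exact this
    have r2 : S.rel i₁ (ξ₀, α') (η₀, back x) := by
      have := hw α' (back x) hα'.1 hxD hxα'
      rw [hxw', hα'.2] at this
      exact this
    exact S.rel_coh i₁ (ξ₀, α) (ξ₀, α') (η₀, back x) hlt r1 r2
  have hmemlev : ∀ α ∈ E, ξ₀ ∈ S.lev α := by
    intro α hα
    have := (hcomp α hα.1).1
    rwa [hα.2] at this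
  -- cardinality of E
  haveI hEne : Nonempty ↥E := by
    obtain ⟨α, hα, -⟩ := hE 0 hμlim.pos
    exact ⟨⟨α, hα⟩⟩
  have hEsub : E ⊆ Set.Iio μ := fun α hα => S.D_lt α hα.1
  have hEle : #(↥E) ≤ Cardinal.lift.{u + 1} (Order.succ lam) := by
    calc #(↥E) ≤ #(Set.Iio μ) := Cardinal.mk_le_mk_of_subset hEsub
    _ = Cardinal.lift.{u + 1} (Order.succ lam) := by
        rw [Ordinal.mk_Iio_ordinal, Cardinal.card_ord]
  have hEge : Cardinal.lift.{u + 1} (Order.succ lam) ≤ #(↥E) := by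
    have hcov : Set.Iio μ ⊆ ⋃ (α : ↥E), Set.Iic (α : Ordinal.{u}) := by
      intro β hβ
      obtain ⟨α, hαE, hβα⟩ := hE β hβ
      exact Set.mem_iUnion.2 ⟨⟨α, hαE⟩, hβα⟩
    have hIic : ∀ α : ↥E, #(Set.Iic (α : Ordinal.{u})) ≤ Cardinal.lift.{u + 1} lam := by
      intro α
      have h1 : Set.Iic (α : Ordinal.{u}) = Set.Iio (Order.succ (α : Ordinal.{u})) :=
        (Order.Iio_succ _).symm
      rw [h1, Ordinal.mk_Iio_ordinal, Ordinal.card_succ]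
      have h2 : (α : Ordinal.{u}).card ≤ lam :=
        Order.lt_succ_iff.1 (Cardinal.lt_ord.1 (hEsub α.2))
      have h3 : (α : Ordinal.{u}).card + 1 ≤ lam := by
        calc (α : Ordinal.{u}).card + 1 ≤ lam + lam :=
              add_le_add h2 (Cardinal.one_le_aleph0.trans hinf)
        _ = lam := Cardinal.add_eq_self hinf
      exact Cardinal.lift_le.2 h3
    have hchain : Cardinal.lift.{u + 1} (Order.succ lam) ≤ #(↥E) * Cardinal.lift.{u + 1} lam := by
      calc Cardinal.lift.{u + 1} (Order.succ lam) = #(Set.Iio μ) := by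
            rw [Ordinal.mk_Iio_ordinal, Cardinal.card_ord]
      _ ≤ #(⋃ (α : ↥E), Set.Iic (α : Ordinal.{u})) := Cardinal.mk_le_mk_of_subset hcov
      _ ≤ #(↥E) * ⨆ (α : ↥E), #(Set.Iic (α : Ordinal.{u})) := Cardinal.mk_iUnion_le _
      _ ≤ #(↥E) * Cardinal.lift.{u + 1} lam :=
            mul_le_mul_right (ciSup_le hIic) _
    by_contra hcon
    push_neg at hcon
    have hlift : #(↥E) ≤ Cardinal.lift.{u + 1} lam := by
      rw [Cardinal.lift_succ] at hcon
      exact Order.lt_succ_iff.1 hcon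
    have : Cardinal.lift.{u + 1} (Order.succ lam) ≤ Cardinal.lift.{u + 1} lam := by
      calc Cardinal.lift.{u + 1} (Order.succ lam) ≤ #(↥E) * Cardinal.lift.{u + 1} lam := hchain
      _ ≤ Cardinal.lift.{u + 1} lam * Cardinal.lift.{u + 1} lam := mul_le_mul_left hlift _
      _ = Cardinal.lift.{u + 1} lam := Cardinal.mul_eq_self (Cardinal.aleph0_le_lift.2 hinf)
    exact absurd (Cardinal.lift_le.1 this) (not_le.2 (Order.lt_succ lam))
  have hEcard : #(↥E) = Cardinal.lift.{u + 1} (Order.succ lam) := le_antisymm hEle hEge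
  -- assemble the branch
  refine ⟨i₁, (fun α => ((ξ₀, α) : Ordinal.{u} × Ordinal.{u})) '' E, ?_, ?_, ?_⟩
  · rintro p ⟨α, hα, rfl⟩
    exact ⟨hα.1, hmemlev α hα⟩
  · rintro p ⟨α, hα, rfl⟩ q ⟨α', hα', rfl⟩ hne
    have hαα' : α ≠ α' := by
      intro h; exact hne (by rw [h])
    rcases hαα'.lt_or_gt with h | h
    · exact Or.inl (hkey α hα α' hα' h)
    · exact Or.inr (hkey α' hα' α hα h)
  · rw [Cardinal.mk_image_eq (fun a b h => congrArg Prod.snd h)]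
    exact hEcard
end

section
/- Let λ be an infinite regular cardinal and μ a cardinal, and let Q be a partial order with a least element 0_Q, of cardinality at most μ, which is λ-complete in the sense that every increasing sequence in Q indexed by an ordinal less than λ has a least upper bound. Let Coll(λ, μ) denote the set of all functions f : α → μ with α an ordinal less than λ, ordered by function extension (with least element the empty function). Then there exists a λ-continuous projection Π : Coll(λ, μ) → Q; that is, a map Π such that: (a) Π is order-preserving; (b) Π maps the empty function to 0_Q; (c) for every p ∈ Coll(λ, μ) and every q ∈ Q with q ≥ Π(p), there is p′ ≥ p in Coll(λ, μ) with Π(p′) ≥ q; and (d) whenever ⟨f_i : i < λ₀⟩, with λ₀ < λ, is an increasing sequence in Coll(λ, μ) and f = ⋃_{i<λ₀} f_i, then Π(f) is the least upper bound in Q of {Π(f_i) : i < λ₀}. -/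
universe u

open Cardinal

/-- `f` is a condition of the collapse `Coll(λ, μ)`: (the graph of) a function from
some ordinal `α < λ` into `μ`.  Conditions are ordered by inclusion of graphs,
which is exactly extension of functions; the least element is the empty function. -/
def IsCollCond (lam mu : Cardinal.{u}) (f : Set (Ordinal.{u} × Ordinal.{u})) : Prop :=
  ∃ α < lam.ord, (∀ p ∈ f, p.1 < α ∧ p.2 < mu.ord) ∧ ∀ β < α, ∃! η, (β, η) ∈ f


open scoped Classical in
noncomputable def collR {Q : Type u} [PartialOrder Q] (q0 : Q) (c : Ordinal.{u} → Q)
    (v : Ordinal.{u} → Ordinal.{u}) (β : Ordinal.{u}) : Q :=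
  Ordinal.limitRecOn β q0
    (fun γ IH => if IH ≤ c (v γ) then c (v γ) else IH)
    (fun δ _ IH =>
      if h : ∃ x : Q, IsLUB {y : Q | ∃ γ, ∃ hγ : γ < δ, y = IH γ hγ} x then h.choose else q0)

theorem collR_zero {Q : Type u} [PartialOrder Q] (q0 : Q) (c : Ordinal.{u} → Q)
    (v : Ordinal.{u} → Ordinal.{u}) : collR q0 c v 0 = q0 :=
  Ordinal.limitRecOn_zero _ _ _

open scoped Classical in
theorem collR_succ {Q : Type u} [PartialOrder Q] (q0 : Q) (c : Ordinal.{u} → Q)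
    (v : Ordinal.{u} → Ordinal.{u}) (γ : Ordinal.{u}) :
    collR q0 c v (Order.succ γ) =
      if collR q0 c v γ ≤ c (v γ) then c (v γ) else collR q0 c v γ := by
  rw [collR, Ordinal.limitRecOn_succ]
  rfl

open scoped Classical in
theorem collR_limit {Q : Type u} [PartialOrder Q] (q0 : Q) (c : Ordinal.{u} → Q)
    (v : Ordinal.{u} → Ordinal.{u}) {δ : Ordinal.{u}} (hδ : Order.IsSuccLimit δ) :
    collR q0 c v δ =
      if h : ∃ x : Q, IsLUB {y : Q | ∃ γ, ∃ hγ : γ < δ, y = collR q0 c v γ} x then h.choose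
      else q0 := by
  rw [collR, Ordinal.limitRecOn_limit _ _ _ _ hδ]
  rfl

theorem collR_local {Q : Type u} [PartialOrder Q] (q0 : Q) (c : Ordinal.{u} → Q)
    (v w : Ordinal.{u} → Ordinal.{u}) :
    ∀ β, (∀ γ < β, v γ = w γ) → collR q0 c v β = collR q0 c w β := by
  intro β
  induction β using Ordinal.limitRecOn with
  | zero => intro _; rw [collR_zero, collR_zero]
  | add_one γ IH =>
    rw [Ordinal.add_one_eq_succ]
    intro h
    rw [collR_succ, collR_succ, IH (fun γ' hγ' => h γ' (hγ'.trans (Order.lt_succ γ))),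
      h γ (Order.lt_succ γ)]
  | limit δ hlim IH =>
    intro h
    have hset : {y : Q | ∃ γ, ∃ hγ : γ < δ, y = collR q0 c v γ} =
        {y : Q | ∃ γ, ∃ hγ : γ < δ, y = collR q0 c w γ} := by
      ext y
      constructor
      · rintro ⟨γ, hγ, rfl⟩
        exact ⟨γ, hγ, IH γ hγ (fun γ' h' => h γ' (h'.trans hγ))⟩
      · rintro ⟨γ, hγ, rfl⟩
        exact ⟨γ, hγ, (IH γ hγ (fun γ' h' => h γ' (h'.trans hγ))).symm⟩
    rw [collR_limit _ _ _ hlim, collR_limit _ _ _ hlim, hset]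

theorem collR_mono {Q : Type u} [PartialOrder Q] (q0 : Q) (c : Ordinal.{u} → Q)
    (v : Ordinal.{u} → Ordinal.{u}) (Λ : Ordinal.{u})
    (hcomp : ∀ δ : Ordinal.{u}, δ < Λ → ∀ g : Ordinal.{u} → Q,
      (∀ i j : Ordinal.{u}, i ≤ j → j < δ → g i ≤ g j) →
      ∃ x : Q, IsLUB {y : Q | ∃ i < δ, y = g i} x) :
    ∀ γ, γ < Λ → ∀ β ≤ γ, collR q0 c v β ≤ collR q0 c v γ := by
  intro γ
  induction γ using Ordinal.limitRecOn with
  | zero =>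
    intro _ β hβ
    rw [nonpos_iff_eq_zero.mp hβ]
  | add_one γ IH =>
    rw [Ordinal.add_one_eq_succ]
    intro hγ β hβ
    have hγΛ : γ < Λ := (Order.lt_succ γ).trans hγ
    have step : collR q0 c v γ ≤ collR q0 c v (Order.succ γ) := by
      rw [collR_succ]
      split
      · assumption
      · exact le_rfl
    rcases eq_or_lt_of_le hβ with rfl | hlt
    · exact le_rfl
    · exact (IH hγΛ β (Order.lt_succ_iff.mp hlt)).trans step
  | limit δ hlim IH =>
    intro hδ β hβ
    have hmono : ∀ i j : Ordinal.{u}, i ≤ j → j < δ → collR q0 c v i ≤ collR q0 c v j :=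
      fun i j hij hj => IH j hj (hj.trans hδ) i hij
    obtain ⟨x, hx⟩ := hcomp δ hδ (fun i => collR q0 c v i) hmono
    have hex : ∃ x : Q, IsLUB {y : Q | ∃ γ, ∃ hγ : γ < δ, y = collR q0 c v γ} x := by
      refine ⟨x, ?_⟩
      have hset : {y : Q | ∃ γ, ∃ hγ : γ < δ, y = collR q0 c v γ} =
          {y : Q | ∃ i < δ, y = collR q0 c v i} := by
        ext y; simp [exists_prop]
      rw [hset]; exact hx
    rw [collR_limit _ _ _ hlim, dif_pos hex]
    rcases eq_or_lt_of_le hβ with rfl | hlt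
    · rw [collR_limit _ _ _ hlim, dif_pos hex]
    · exact hex.choose_spec.1 ⟨β, hlt, rfl⟩

theorem collR_isLUB {Q : Type u} [PartialOrder Q] (q0 : Q) (c : Ordinal.{u} → Q)
    (v : Ordinal.{u} → Ordinal.{u}) (Λ : Ordinal.{u})
    (hcomp : ∀ δ : Ordinal.{u}, δ < Λ → ∀ g : Ordinal.{u} → Q,
      (∀ i j : Ordinal.{u}, i ≤ j → j < δ → g i ≤ g j) →
      ∃ x : Q, IsLUB {y : Q | ∃ i < δ, y = g i} x)
    {δ : Ordinal.{u}} (hlim : Order.IsSuccLimit δ) (hδ : δ < Λ) :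
    IsLUB {y : Q | ∃ i < δ, y = collR q0 c v i} (collR q0 c v δ) := by
  have hmono : ∀ i j : Ordinal.{u}, i ≤ j → j < δ → collR q0 c v i ≤ collR q0 c v j :=
    fun i j hij hj => collR_mono q0 c v Λ hcomp j (hj.trans hδ) i hij
  obtain ⟨x, hx⟩ := hcomp δ hδ (fun i => collR q0 c v i) hmono
  have hset : {y : Q | ∃ γ, ∃ hγ : γ < δ, y = collR q0 c v γ} =
      {y : Q | ∃ i < δ, y = collR q0 c v i} := by
    ext y; simp [exists_prop]
  have hex : ∃ x : Q, IsLUB {y : Q | ∃ γ, ∃ hγ : γ < δ, y = collR q0 c v γ} x := by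
    refine ⟨x, ?_⟩; rw [hset]; exact hx
  rw [collR_limit _ _ _ hlim, dif_pos hex]
  have h1 := hex.choose_spec
  rw [← hset]
  exact h1

/-- Let `λ` be an infinite regular cardinal, `μ` a cardinal, and `Q` a partial order with a
least element `q0`, of cardinality at most `μ`, which is `λ`-complete (every increasing
sequence indexed by an ordinal `< λ` has a least upper bound). Then there is a
`λ`-continuous projection `pr : Coll(λ, μ) → Q`: it is order-preserving, sends the empty
function to `q0`, satisfies the projection property, and sends the union of an increasing
sequence of length `< λ` to the least upper bound of the images. -/
theorem exists_cont_projection_of_coll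
    (lam : Cardinal.{u}) (hreg : lam.IsRegular) (mu : Cardinal.{u})
    (Q : Type u) [PartialOrder Q] (q0 : Q) (hq0 : ∀ q, q0 ≤ q)
    (hcard : #Q ≤ mu)
    (hcomplete : ∀ δ : Ordinal.{u}, δ < lam.ord → ∀ g : Ordinal.{u} → Q,
      (∀ i j : Ordinal.{u}, i ≤ j → j < δ → g i ≤ g j) →
      ∃ x : Q, IsLUB {y : Q | ∃ i < δ, y = g i} x) :
    ∃ pr : {f : Set (Ordinal.{u} × Ordinal.{u}) // IsCollCond lam mu f} → Q,
      -- (a) order-preserving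
      (∀ p q, p.1 ⊆ q.1 → pr p ≤ pr q) ∧
      -- (b) the empty function is sent to the least element of `Q`
      (∀ p, p.1 = ∅ → pr p = q0) ∧
      -- (c) the projection property
      (∀ p q, pr p ≤ q → ∃ p', p.1 ⊆ p'.1 ∧ q ≤ pr p') ∧
      -- (d) λ-continuity
      (∀ δ : Ordinal.{u}, δ < lam.ord →
        ∀ g : Ordinal.{u} → {f : Set (Ordinal.{u} × Ordinal.{u}) // IsCollCond lam mu f},
        (∀ i j : Ordinal.{u}, i ≤ j → j < δ → (g i).1 ⊆ (g j).1) →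
        ∀ F : {f : Set (Ordinal.{u} × Ordinal.{u}) // IsCollCond lam mu f},
          F.1 = ⋃ i ∈ Set.Iio δ, (g i).1 →
          IsLUB {y : Q | ∃ i < δ, y = pr (g i)} (pr F)) := by
  classical
  have hlimord : Order.IsSuccLimit lam.ord := Cardinal.isSuccLimit_ord hreg.aleph0_le
  -- coding of elements of `Q` by ordinals `< mu.ord`
  haveI : Nonempty Q := ⟨q0⟩
  obtain ⟨e⟩ : Nonempty (Q ↪ mu.ord.ToType) :=
    (Cardinal.le_def Q mu.ord.ToType).mp (by rw [Cardinal.mk_ord_toType]; exact hcard)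
  set c : Ordinal.{u} → Q := fun η =>
    if h : η < mu.ord then Function.invFun e ((Ordinal.ToType.mk (o := mu.ord)) ⟨η, h⟩) else q0
    with hc
  have hcsurj : ∀ r : Q, ∃ η < mu.ord, c η = r := by
    intro r
    refine ⟨((Ordinal.ToType.mk (o := mu.ord)).symm (e r)).1,
      ((Ordinal.ToType.mk (o := mu.ord)).symm (e r)).2, ?_⟩
    rw [hc]
    dsimp only
    rw [dif_pos (Set.mem_Iio.mp ((Ordinal.ToType.mk (o := mu.ord)).symm (e r)).2)]
    have h1 : (⟨((Ordinal.ToType.mk (o := mu.ord)).symm (e r)).1,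
        ((Ordinal.ToType.mk (o := mu.ord)).symm (e r)).2⟩ : Set.Iio mu.ord) =
        (Ordinal.ToType.mk (o := mu.ord)).symm (e r) := rfl
    rw [h1, OrderIso.apply_symm_apply]
    exact Function.leftInverse_invFun e.injective r
  -- the value function of a condition
  set v : Set (Ordinal.{u} × Ordinal.{u}) → Ordinal.{u} → Ordinal.{u} := fun p β =>
    if h : ∃ η, (β, η) ∈ p then h.choose else 0 with hvdef
  have hv_mem : ∀ (p : Set (Ordinal.{u} × Ordinal.{u})) (β η : Ordinal.{u}),
      (β, η) ∈ p → (β, v p β) ∈ p := by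
    intro p β η h
    rw [hvdef]
    dsimp only
    rw [dif_pos ⟨η, h⟩]
    exact (⟨η, h⟩ : ∃ η, (β, η) ∈ p).choose_spec
  -- the domain (as an ordinal) of a condition
  set Sub := {f : Set (Ordinal.{u} × Ordinal.{u}) // IsCollCond lam mu f} with hSub
  set A : Sub → Ordinal.{u} := fun p => p.2.choose with hA
  have hAspec : ∀ p : Sub, A p < lam.ord ∧ (∀ q ∈ p.1, q.1 < A p ∧ q.2 < mu.ord) ∧
      ∀ β < A p, ∃! η, (β, η) ∈ p.1 := by
    intro p
    exact ⟨p.2.choose_spec.1, p.2.choose_spec.2.1, p.2.choose_spec.2.2⟩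
  have hdomc : ∀ (p : Sub) (β : Ordinal.{u}), β < A p ↔ ∃ η, (β, η) ∈ p.1 := by
    intro p β
    constructor
    · intro h
      exact ((hAspec p).2.2 β h).exists
    · rintro ⟨η, hη⟩
      exact ((hAspec p).2.1 _ hη).1
  have hAuniq : ∀ (p : Sub) (α : Ordinal.{u}),
      (∀ q ∈ p.1, q.1 < α) → (∀ β < α, ∃ η, (β, η) ∈ p.1) → A p = α := by
    intro p α h1 h2
    refine le_antisymm (le_of_forall_lt fun β hβ => ?_) (le_of_forall_lt fun β hβ => ?_)
    · obtain ⟨η, hη⟩ := (hdomc p β).mp hβ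
      exact h1 _ hη
    · exact (hdomc p β).mpr (h2 β hβ)
  have hAmono : ∀ p q : Sub, p.1 ⊆ q.1 → A p ≤ A q := by
    intro p q h
    refine le_of_forall_lt fun β hβ => ?_
    obtain ⟨η, hη⟩ := (hdomc p β).mp hβ
    exact (hdomc q β).mpr ⟨η, h hη⟩
  have hvagree : ∀ p q : Sub, p.1 ⊆ q.1 → ∀ β < A p, v p.1 β = v q.1 β := by
    intro p q hpq β hβ
    obtain ⟨η, hη⟩ := (hdomc p β).mp hβ
    have h1 : (β, v p.1 β) ∈ p.1 := hv_mem _ _ _ hη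
    have h2 : (β, v q.1 β) ∈ q.1 := hv_mem _ _ _ (hpq hη)
    have hβq : β < A q := ((hAspec q).2.1 _ (hpq hη)).1
    obtain ⟨η', hη', huniq⟩ := (hAspec q).2.2 β hβq
    exact (huniq _ (hpq h1)).trans (huniq _ h2).symm
  -- the projection
  refine ⟨fun p => collR q0 c (v p.1) (A p), ?_, ?_, ?_, ?_⟩
  -- (a) monotone
  · intro p q hpq
    have h1 : collR q0 c (v p.1) (A p) = collR q0 c (v q.1) (A p) :=
      collR_local q0 c _ _ (A p) (fun γ hγ => hvagree p q hpq γ hγ)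
    dsimp only
    rw [h1]
    exact collR_mono q0 c (v q.1) lam.ord hcomplete (A q) (hAspec q).1 (A p) (hAmono p q hpq)
  -- (b) empty condition
  · intro p hp
    have h0 : A p = 0 := by
      refine hAuniq p 0 ?_ ?_
      · intro q hq
        rw [hp] at hq
        exact absurd hq (Set.notMem_empty q)
      · intro β hβ
        exact absurd hβ (not_lt_of_ge (zero_le (a := β)))
    dsimp only
    rw [h0, collR_zero]
  -- (c) projection property
  · intro p q hq
    dsimp only at hq
    obtain ⟨η, hη, hcη⟩ := hcsurj q
    have hα : A p < lam.ord := (hAspec p).1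
    have hsucc : Order.succ (A p) < lam.ord := hlimord.succ_lt hα
    set s : Set (Ordinal.{u} × Ordinal.{u}) := insert (A p, η) p.1 with hs
    have hpairs : ∀ r ∈ s, r.1 < Order.succ (A p) ∧ r.2 < mu.ord := by
      intro r hr
      rcases Set.mem_insert_iff.mp hr with rfl | hr
      · exact ⟨Order.lt_succ _, hη⟩
      · obtain ⟨h1, h2⟩ := (hAspec p).2.1 r hr
        exact ⟨h1.trans (Order.lt_succ _), h2⟩
    have huniqs : ∀ β < Order.succ (A p), ∃! η', (β, η') ∈ s := by
      intro β hβ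
      rcases lt_or_eq_of_le (Order.lt_succ_iff.mp hβ) with hlt | rfl
      · obtain ⟨η', hη', hu⟩ := (hAspec p).2.2 β hlt
        refine ⟨η', Set.mem_insert_of_mem _ hη', fun y hy => ?_⟩
        rcases Set.mem_insert_iff.mp hy with heq | hyp
        · exact absurd (congrArg Prod.fst heq) hlt.ne
        · exact hu y hyp
      · refine ⟨η, Set.mem_insert _ _, fun y hy => ?_⟩
        rcases Set.mem_insert_iff.mp hy with heq | hyp
        · exact congrArg Prod.snd heq
        · exact absurd ((hAspec p).2.1 _ hyp).1 (lt_irrefl _)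
    have hcond : IsCollCond lam mu s := ⟨Order.succ (A p), hsucc, hpairs, huniqs⟩
    set p' : Sub := ⟨s, hcond⟩ with hp'
    have hsub : p.1 ⊆ p'.1 := Set.subset_insert _ _
    have hA' : A p' = Order.succ (A p) := by
      refine hAuniq p' _ (fun r hr => (hpairs r hr).1) (fun β hβ => (huniqs β hβ).exists)
    have hvα : v s (A p) = η := by
      have hmem : (A p, v s (A p)) ∈ s := hv_mem _ _ _ (Set.mem_insert _ _)
      exact (huniqs (A p) (Order.lt_succ _)).unique hmem (Set.mem_insert _ _)
    have hvag : ∀ γ < A p, v p.1 γ = v s γ := hvagree p p' hsub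
    refine ⟨p', hsub, ?_⟩
    dsimp only
    rw [hA', collR_succ]
    have hagree : collR q0 c (v s) (A p) = collR q0 c (v p.1) (A p) :=
      collR_local q0 c _ _ (A p) (fun γ hγ => (hvag γ hγ).symm)
    have hle : collR q0 c (v s) (A p) ≤ c (v s (A p)) := by
      rw [hvα, hcη, hagree]
      exact hq
    rw [if_pos hle, hvα, hcη]
  -- (d) continuity
  · intro δ hδ g hg F hF
    have hsubF : ∀ i < δ, (g i).1 ⊆ F.1 := by
      intro i hi x hx
      rw [hF]
      exact Set.mem_biUnion hi hx
    have hAi_le : ∀ i < δ, A (g i) ≤ A F := fun i hi => hAmono _ _ (hsubF i hi)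
    have hAFlt : A F < lam.ord := (hAspec F).1
    have hchar : ∀ β, β < A F ↔ ∃ i < δ, β < A (g i) := by
      intro β
      rw [hdomc F β]
      constructor
      · rintro ⟨η, hη⟩
        rw [hF] at hη
        obtain ⟨i, hi, hmem⟩ := Set.mem_iUnion₂.mp hη
        exact ⟨i, hi, (hdomc (g i) β).mpr ⟨η, hmem⟩⟩
      · rintro ⟨i, hi, hβ⟩
        obtain ⟨η, hη⟩ := (hdomc (g i) β).mp hβ
        exact ⟨η, hsubF i hi hη⟩
    have hpr_i : ∀ i < δ, collR q0 c (v (g i).1) (A (g i)) = collR q0 c (v F.1) (A (g i)) :=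
      fun i hi => collR_local q0 c _ _ (A (g i)) (fun γ hγ => hvagree (g i) F (hsubF i hi) γ hγ)
    have hmonoF := collR_mono q0 c (v F.1) lam.ord hcomplete
    dsimp only
    by_cases hatt : ∃ i, i < δ ∧ A (g i) = A F
    · obtain ⟨i0, hi0, hA0⟩ := hatt
      constructor
      · rintro y ⟨i, hi, rfl⟩
        rw [hpr_i i hi]
        exact hmonoF (A F) hAFlt _ (hAi_le i hi)
      · intro x hx
        have hFi : collR q0 c (v F.1) (A F) = collR q0 c (v (g i0).1) (A (g i0)) := by
          rw [hpr_i i0 hi0, hA0]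
        exact hx ⟨i0, hi0, hFi⟩
    · push_neg at hatt
      by_cases h0 : A F = 0
      · have hq00 : collR q0 c (v F.1) (A F) = q0 := by rw [h0, collR_zero]
        rw [hq00]
        constructor
        · rintro y ⟨i, hi, rfl⟩
          have hAi0 : A (g i) = 0 := le_antisymm (h0 ▸ hAi_le i hi) zero_le
          rw [hAi0, collR_zero]
        · intro x _
          exact hq0 x
      · have hlim : Order.IsSuccLimit (A F) := by
          refine Ordinal.isSuccLimit_iff.mpr ⟨h0, Order.isSuccPrelimit_of_succ_lt fun β hβ => ?_⟩
          obtain ⟨i, hi, hβi⟩ := (hchar β).mp hβ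
          exact (Order.succ_le_of_lt hβi).trans_lt ((hAi_le i hi).lt_of_ne (hatt i hi))
        have hlub := collR_isLUB q0 c (v F.1) lam.ord hcomplete hlim hAFlt
        have hub_eq : upperBounds {y : Q | ∃ i < δ, y = collR q0 c (v (g i).1) (A (g i))} =
            upperBounds {y : Q | ∃ β < A F, y = collR q0 c (v F.1) β} := by
          ext x
          constructor
          · rintro hx z ⟨β, hβ, rfl⟩
            obtain ⟨i, hi, hβi⟩ := (hchar β).mp hβ
            have h1 : collR q0 c (v F.1) β ≤ collR q0 c (v F.1) (A (g i)) :=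
              hmonoF (A (g i)) ((hAi_le i hi).trans_lt hAFlt) β hβi.le
            exact h1.trans (hx ⟨i, hi, (hpr_i i hi).symm⟩)
          · rintro hx z ⟨i, hi, rfl⟩
            rw [hpr_i i hi]
            exact hx ⟨A (g i), (hAi_le i hi).lt_of_ne (hatt i hi), rfl⟩
        constructor
        · rw [hub_eq]
          exact hlub.1
        · intro x hx
          rw [hub_eq] at hx
          exact hlub.2 hx
end

section
/- Let λ be an infinite cardinal and let T be a tree of height λ⁺. Then there is no nonempty subset E of T satisfying all of the following: (1) every node of E has extensions in E at arbitrarily high levels below λ⁺; (2) E is downward closed in T (every strict predecessor of a node of E belongs to E); (3) every node of E has two incomparable extensions in E; and (4) for every α < λ⁺, the set E ∩ T_α has cardinality strictly less than λ. -/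
universe u

open Cardinal

/-! ### Auxiliary tree lemmas -/

namespace TreeAux
variable {T : Type u} {lt : T → T → Prop} (ht : IsTree lt)
include ht

/-- T1 : the level of a predecessor is its typein in the predecessors of x. -/
theorem level_eq_typein {x y : T} (h : lt y x) :
    ht.level y = @Ordinal.typein {z // lt z x} (fun a b => lt a.1 b.1) (ht.wo x) ⟨y, h⟩ := by
  letI := ht.wo x
  letI := ht.wo y
  rw [← Ordinal.type_subrel]
  refine Eq.symm (RelIso.ordinal_type_eq ?_)
  exact {
    toFun := fun p => ⟨p.1.1, p.2⟩
    invFun := fun q => ⟨⟨q.1, ht.trans q.2 h⟩, q.2⟩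
    left_inv := fun p => rfl
    right_inv := fun q => rfl
    map_rel_iff' := Iff.rfl }

theorem level_lt {x y : T} (h : lt x y) : ht.level x < ht.level y := by
  letI := ht.wo y
  rw [level_eq_typein ht h]
  exact Ordinal.typein_lt_type _ _

/-- trichotomy among predecessors of a common node -/
theorem trichot {a b c : T} (ha : lt a c) (hb : lt b c) : lt a b ∨ a = b ∨ lt b a := by
  letI := ht.wo c
  rcases trichotomous_of (fun p q : {y // lt y c} => lt p.1 q.1) ⟨a, ha⟩ ⟨b, hb⟩ with h | h | h
  · exact Or.inl h
  · exact Or.inr (Or.inl (congrArg Subtype.val h))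
  · exact Or.inr (Or.inr h)

theorem pred_unique {a b c : T} (ha : lt a c) (hb : lt b c)
    (hl : ht.level a = ht.level b) : a = b := by
  rcases trichot ht ha hb with h | h | h
  · exact absurd hl (ne_of_lt (level_lt ht h))
  · exact h
  · exact absurd hl.symm (ne_of_lt (level_lt ht h))

theorem pred_lt_pred {a b c : T} (ha : lt a c) (hb : lt b c)
    (hl : ht.level a < ht.level b) : lt a b := by
  rcases trichot ht ha hb with h | h | h
  · exact h
  · exact absurd (h ▸ hl) (lt_irrefl _)
  · exact absurd (hl.trans (level_lt ht h)) (lt_irrefl _)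

/-- T5 : existence of a predecessor at every lower level. -/
theorem exists_pred {x : T} {β : Ordinal.{u}} (hβ : β < ht.level x) :
    ∃ y, lt y x ∧ ht.level y = β := by
  letI := ht.wo x
  obtain ⟨⟨y, hy⟩, hty⟩ := Ordinal.typein_surj (fun a b : {z // lt z x} => lt a.1 b.1) hβ
  exact ⟨y, hy, by rw [level_eq_typein ht hy, hty]⟩

end TreeAux

/-! ### Ordinal iteration machinery -/

/-- the ordinal corresponding to an element of `i.ToType`. -/
noncomputable def otypein (i : Ordinal.{u}) (a : i.ToType) : Ordinal.{u} :=
  @Ordinal.typein i.ToType (· < ·) isWellOrder_lt a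

theorem otypein_lt_self (i : Ordinal.{u}) (a : i.ToType) : otypein i a < i :=
  Ordinal.typein_lt_self a

/-- the element of `i.ToType` corresponding to an ordinal `j < i`. -/
noncomputable def oenum (i : Ordinal.{u}) (j : Ordinal.{u}) (h : j < i) : i.ToType :=
  @Ordinal.enum i.ToType (· < ·) isWellOrder_lt ⟨j, by rwa [Ordinal.type_toType]⟩

theorem otypein_oenum (i : Ordinal.{u}) (j : Ordinal.{u}) (h : j < i) :
    otypein i (oenum i j h) = j :=
  @Ordinal.typein_enum i.ToType (· < ·) isWellOrder_lt j (by rwa [Ordinal.type_toType])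

noncomputable def iterSup (N : Ordinal.{u} → Ordinal.{u}) (δ₀ : Ordinal.{u}) :
    Ordinal.{u} → Ordinal.{u} :=
  WellFounded.fix (C := fun _ => Ordinal.{u}) Ordinal.lt_wf
    (fun i IH => N (δ₀ ⊔ ⨆ a : i.ToType, IH (otypein i a) (otypein_lt_self i a)))

theorem iterSup_eq (N : Ordinal.{u} → Ordinal.{u}) (δ₀ i : Ordinal.{u}) :
    iterSup N δ₀ i = N (δ₀ ⊔ ⨆ a : i.ToType, iterSup N δ₀ (otypein i a)) :=
  WellFounded.fix_eq _ _ _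

section iterlemmas
variable {N : Ordinal.{u} → Ordinal.{u}} {δ₀ : Ordinal.{u}} {lam μ : Cardinal.{u}}
  (hmono : ∀ {a b : Ordinal.{u}}, a ≤ b → N a ≤ N b)
  (hself : ∀ a : Ordinal.{u}, a < N a)
  (hinf : ℵ₀ ≤ lam)
  (hNlt : ∀ a, a < (Order.succ lam).ord → N a < (Order.succ lam).ord)
  (hμreg : μ.IsRegular) (hμle : μ ≤ lam) (hδ₀ : δ₀ < (Order.succ lam).ord)

include hself in
theorem iterSup_strictMono : StrictMono (iterSup N δ₀) := by
  intro j i hji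
  rw [iterSup_eq N δ₀ i]
  have h1 : iterSup N δ₀ j ≤ ⨆ a : i.ToType, iterSup N δ₀ (otypein i a) := by
    have := le_ciSup (Ordinal.bddAbove_range
      (fun a : i.ToType => iterSup N δ₀ (otypein i a))) (oenum i j hji)
    rwa [otypein_oenum] at this
  calc iterSup N δ₀ j ≤ _ := h1
    _ ≤ δ₀ ⊔ _ := le_sup_right
    _ < _ := hself _

include hself in
theorem iterSup_mono {j i : Ordinal.{u}} (h : j ≤ i) :
    iterSup N δ₀ j ≤ iterSup N δ₀ i :=
  (iterSup_strictMono hself).monotone h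

include hmono in
theorem map_iterSup_le {j i : Ordinal.{u}} (h : j < i) :
    N (iterSup N δ₀ j) ≤ iterSup N δ₀ i := by
  rw [iterSup_eq N δ₀ i]
  apply hmono
  refine le_trans ?_ le_sup_right
  have := le_ciSup (Ordinal.bddAbove_range
    (fun a : i.ToType => iterSup N δ₀ (otypein i a))) (oenum i j h)
  rwa [otypein_oenum] at this

include hself in
theorem le_iterSup_zero : δ₀ ≤ iterSup N δ₀ 0 := by
  rw [iterSup_eq]
  exact le_trans le_sup_left (le_of_lt (hself _))

omit hinf in
include hμle in
theorem card_lt_of_lt_mu_ord {i : Ordinal.{u}} (h : i < μ.ord) :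
    i.card < Order.succ lam := by
  have : i < (Order.succ lam).ord :=
    h.trans_le ((Cardinal.ord_le_ord.2 hμle).trans
      (Cardinal.ord_le_ord.2 (le_of_lt (Order.lt_succ lam))))
  exact Cardinal.lt_ord.1 this

include hinf hNlt hμle hδ₀ in
theorem iterSup_lt_o : ∀ i, i < μ.ord → iterSup N δ₀ i < (Order.succ lam).ord := by
  intro i
  induction i using Ordinal.induction with
  | _ i IH =>
    intro hi
    rw [iterSup_eq]
    apply hNlt
    apply max_lt hδ₀
    apply Cardinal.iSup_lt_ord_of_isRegular (Cardinal.isRegular_succ hinf)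
    · rw [Cardinal.mk_toType]
      exact card_lt_of_lt_mu_ord hμle hi
    · intro a
      exact IH _ (otypein_lt_self i a) ((otypein_lt_self i a).trans hi)

/-- the closure point of `N` above `δ₀` of cofinality `μ`. -/
noncomputable def gammaOf (N : Ordinal.{u} → Ordinal.{u}) (δ₀ : Ordinal.{u})
    (μ : Cardinal.{u}) : Ordinal.{u} :=
  ⨆ a : μ.ord.ToType, iterSup N δ₀ (otypein μ.ord a)

theorem iter_le_gamma {i : Ordinal.{u}} (h : i < μ.ord) :
    iterSup N δ₀ i ≤ gammaOf N δ₀ μ := by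
  have := le_ciSup (Ordinal.bddAbove_range
    (fun a : μ.ord.ToType => iterSup N δ₀ (otypein μ.ord a))) (oenum μ.ord i h)
  rwa [otypein_oenum] at this

include hself hμreg in
theorem iter_lt_gamma {i : Ordinal.{u}} (h : i < μ.ord) :
    iterSup N δ₀ i < gammaOf N δ₀ μ := by
  have hlim : Order.IsSuccLimit (μ.ord) := Cardinal.isSuccLimit_ord hμreg.aleph0_le
  have h1 : i + 1 < μ.ord := by
    rw [Ordinal.add_one_eq_succ]
    exact hlim.succ_lt h
  exact lt_of_lt_of_le (iterSup_strictMono hself (lt_add_one i)) (iter_le_gamma h1)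

include hinf hNlt hμle hδ₀ in
theorem gamma_lt_o : gammaOf N δ₀ μ < (Order.succ lam).ord := by
  apply Cardinal.iSup_lt_ord_of_isRegular (Cardinal.isRegular_succ hinf)
  · rw [Cardinal.mk_toType, Cardinal.card_ord]
    exact hμle.trans_lt (Order.lt_succ lam)
  · intro a
    exact iterSup_lt_o hinf hNlt hμle hδ₀ _ (otypein_lt_self _ a)

include hμreg in
theorem lt_gamma_iff {x : Ordinal.{u}} (h : x < gammaOf N δ₀ μ) :
    ∃ i, i < μ.ord ∧ x < iterSup N δ₀ i := by
  have hne : Nonempty μ.ord.ToType := by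
    rw [Ordinal.nonempty_toType_iff]
    exact (Cardinal.isSuccLimit_ord hμreg.aleph0_le).pos.ne'
  rw [gammaOf, lt_ciSup_iff (Ordinal.bddAbove_range _)] at h
  obtain ⟨a, ha⟩ := h
  exact ⟨otypein μ.ord a, otypein_lt_self _ a, ha⟩

include hself hμreg in
theorem delta0_lt_gamma : δ₀ < gammaOf N δ₀ μ :=
  lt_of_le_of_lt (le_iterSup_zero hself)
    (iter_lt_gamma hself hμreg (Cardinal.isSuccLimit_ord hμreg.aleph0_le).pos)

include hmono hself hμreg in
theorem gamma_closed {δ : Ordinal.{u}} (h : δ < gammaOf N δ₀ μ) :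
    N δ < gammaOf N δ₀ μ := by
  obtain ⟨i, hi, hlt⟩ := lt_gamma_iff hμreg h
  have h1 : N δ ≤ iterSup N δ₀ (i + 1) :=
    le_trans (hmono hlt.le) (map_iterSup_le hmono (lt_add_one i))
  have h2 : i + 1 < μ.ord := by
    rw [Ordinal.add_one_eq_succ]
    exact (Cardinal.isSuccLimit_ord hμreg.aleph0_le).succ_lt hi
  exact h1.trans_lt (iter_lt_gamma hself hμreg h2)

include hself hμreg in
theorem gamma_bdd {ι : Type u} (f : ι → Ordinal.{u}) (hι : #ι < μ)
    (hf : ∀ x, f x < gammaOf N δ₀ μ) :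
    ∃ b, b < gammaOf N δ₀ μ ∧ ∀ x, f x ≤ b := by
  have := fun x => lt_gamma_iff (δ₀ := δ₀) hμreg (hf x)
  choose g hg1 hg2 using this
  have hj : (⨆ x, g x) < μ.ord := Cardinal.iSup_lt_ord_of_isRegular hμreg hι hg1
  refine ⟨iterSup N δ₀ (⨆ x, g x), iter_lt_gamma hself hμreg hj, fun x => ?_⟩
  exact le_of_lt ((hg2 x).trans_le (iterSup_mono hself
    (le_ciSup (Ordinal.bddAbove_range g) x)))

end iterlemmas

open TreeAux in
/-- In a tree of height `λ⁺` (for `λ` an infinite cardinal) there is no nonempty subset `E`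
such that: (1) every node of `E` has extensions in `E` at arbitrarily high levels below `λ⁺`;
(2) `E` is downward closed; (3) every node of `E` has two incomparable extensions in `E`;
(4) every level of `E` has cardinality `< λ`. -/
theorem no_thin_splitting_subtree
    (lam : Cardinal.{u}) (hinf : ℵ₀ ≤ lam)
    {T : Type u} (lt : T → T → Prop) (ht : IsTree lt)
    (hheight : ∀ x : T, ht.level x < (Order.succ lam).ord)
    (hfull : ∀ α < (Order.succ lam).ord, ∃ x : T, ht.level x = α)
    (E : Set T) (hne : E.Nonempty)
    (h1 : ∀ x ∈ E, ∀ α < (Order.succ lam).ord, ∃ y ∈ E, lt x y ∧ α ≤ ht.level y)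
    (h2 : ∀ x ∈ E, ∀ y : T, lt y x → y ∈ E)
    (h3 : ∀ x ∈ E, ∃ y ∈ E, ∃ z ∈ E, lt x y ∧ lt x z ∧ y ≠ z ∧ ¬ lt y z ∧ ¬ lt z y)
    (h4 : ∀ α : Ordinal.{u}, #{x : T // x ∈ E ∧ ht.level x = α} < lam) :
    False := by
  have hsuccinf : ℵ₀ ≤ Order.succ lam := hinf.trans (le_of_lt (Order.lt_succ lam))
  have ho_lim : Order.IsSuccLimit ((Order.succ lam).ord) := Cardinal.isSuccLimit_ord hsuccinf
  -- extension to an exact level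
  have hE1 : ∀ x, x ∈ E → ∀ β, ht.level x ≤ β → β < (Order.succ lam).ord →
      ∃ z, z ∈ E ∧ ht.level z = β ∧ (lt x z ∨ x = z) := by
    intro x hx β hβ hβo
    obtain ⟨y, hyE, hxy, hylev⟩ := h1 x hx β hβo
    rcases eq_or_lt_of_le hylev with hcase | hcase
    · exact ⟨y, hyE, hcase.symm, Or.inl hxy⟩
    · obtain ⟨z, hzy, hzl⟩ := exists_pred ht hcase
      have hzE : z ∈ E := h2 y hyE z hzy
      rcases eq_or_lt_of_le hβ with hx2 | hx2
      · exact ⟨z, hzE, hzl, Or.inr (pred_unique ht hxy hzy (by rw [hzl]; exact hx2))⟩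
      · exact ⟨z, hzE, hzl, Or.inl (pred_lt_pred ht hxy hzy (by rw [hzl]; exact hx2))⟩
  have hE1s : ∀ x, x ∈ E → ∀ β, ht.level x < β → β < (Order.succ lam).ord →
      ∃ z, z ∈ E ∧ ht.level z = β ∧ lt x z := by
    intro x hx β hβ hβo
    obtain ⟨z, hzE, hzl, hcase⟩ := hE1 x hx β hβ.le hβo
    rcases hcase with h | h
    · exact ⟨z, hzE, hzl, h⟩
    · exact absurd (h ▸ hzl) (ne_of_lt hβ)
  -- every level of E is nonempty
  have hE2 : ∀ β, β < (Order.succ lam).ord → ∃ u, u ∈ E ∧ ht.level u = β := by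
    intro β hβ
    obtain ⟨x0, hx0⟩ := hne
    rcases le_or_gt (ht.level x0) β with hc | hc
    · obtain ⟨z, hzE, hzl, _⟩ := hE1 x0 hx0 β hc hβ
      exact ⟨z, hzE, hzl⟩
    · obtain ⟨y, hyx, hyl⟩ := exists_pred ht hc
      exact ⟨y, h2 x0 hx0 y hyx, hyl⟩
  -- twins : two distinct extensions at a common level
  have twins : ∀ x, x ∈ E → ∃ v₁ v₂ : T, v₁ ∈ E ∧ v₂ ∈ E ∧ v₁ ≠ v₂ ∧
      lt x v₁ ∧ lt x v₂ ∧ ht.level v₁ = ht.level v₂ := by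
    intro x hx
    obtain ⟨y, hy, z, hz, hxy, hxz, hyz, hnyz, hnzy⟩ := h3 x hx
    have hβo : ht.level y ⊔ ht.level z < (Order.succ lam).ord :=
      max_lt (hheight y) (hheight z)
    obtain ⟨y', hy'E, hy'l, hy'r⟩ := hE1 y hy _ le_sup_left hβo
    obtain ⟨z', hz'E, hz'l, hz'r⟩ := hE1 z hz _ le_sup_right hβo
    have hxy' : lt x y' := by
      rcases hy'r with h | h
      · exact ht.trans hxy h
      · exact h ▸ hxy
    have hxz' : lt x z' := by
      rcases hz'r with h | h
      · exact ht.trans hxz h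
      · exact h ▸ hxz
    refine ⟨y', z', hy'E, hz'E, ?_, hxy', hxz', hy'l.trans hz'l.symm⟩
    intro he
    subst he
    rcases hy'r with h | h <;> rcases hz'r with h' | h'
    · rcases trichot ht h h' with hc | hc | hc
      · exact hnyz hc
      · exact hyz hc
      · exact hnzy hc
    · subst h'
      exact hnyz h
    · subst h
      exact hnzy h'
    · exact hyz (h.trans h'.symm)
  choose! tw1 tw2 htwE1 htwE2 htwne htwlt1 htwlt2 htwlev using twins
  -- monotonicity of level sizes
  have hSmono : ∀ α β : Ordinal.{u}, α ≤ β → β < (Order.succ lam).ord →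
      #{x : T // x ∈ E ∧ ht.level x = α} ≤ #{x : T // x ∈ E ∧ ht.level x = β} := by
    intro α β hαβ hβo
    have hch : ∀ u : {x : T // x ∈ E ∧ ht.level x = α},
        ∃ z, z ∈ E ∧ ht.level z = β ∧ (lt u.1 z ∨ u.1 = z) :=
      fun u => hE1 u.1 u.2.1 β (le_of_eq_of_le u.2.2 hαβ) hβo
    choose f hfE hfl hfr using hch
    apply Cardinal.mk_le_of_injective
      (f := fun u => (⟨f u, hfE u, hfl u⟩ : {x : T // x ∈ E ∧ ht.level x = β}))
    intro u u' he
    have he' : f u = f u' := congrArg Subtype.val he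
    apply Subtype.ext
    rcases hfr u with h | h <;> rcases hfr u' with h' | h'
    · exact pred_unique ht h (he' ▸ h') (u.2.2.trans u'.2.2.symm)
    · exfalso
      have : α < β := by
        have := level_lt ht h
        rwa [u.2.2, hfl u] at this
      have : α = β := u'.2.2.symm.trans (h' ▸ hfl u')
      simp_all
    · exfalso
      have : α < β := by
        have := level_lt ht h'
        rwa [u'.2.2, hfl u'] at this
      have : α = β := u.2.2.symm.trans (h ▸ hfl u)
      simp_all
    · rw [h, he', ← h']
  -- cardinality of an initial part of E
  have hC1 : ∀ a, a < (Order.succ lam).ord → #{u : T // u ∈ E ∧ ht.level u ≤ a} ≤ lam := by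
    intro a ha
    have ha1 : a + 1 < (Order.succ lam).ord := by
      rw [Ordinal.add_one_eq_succ]; exact ho_lim.succ_lt ha
    have hsub : {u : T | u ∈ E ∧ ht.level u ≤ a} ⊆
        ⋃ b : (a+1).ToType, {u : T | u ∈ E ∧ ht.level u = otypein (a+1) b} := by
      intro u hu
      have hlt : ht.level u < a + 1 := lt_of_le_of_lt hu.2 (lt_add_one a)
      exact Set.mem_iUnion.2 ⟨oenum (a+1) (ht.level u) hlt,
        hu.1, (otypein_oenum _ _ hlt).symm⟩
    calc #{u : T // u ∈ E ∧ ht.level u ≤ a}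
        ≤ #(⋃ b : (a+1).ToType, {u : T | u ∈ E ∧ ht.level u = otypein (a+1) b}) :=
          Cardinal.mk_le_mk_of_subset hsub
      _ ≤ Cardinal.sum (fun b : (a+1).ToType =>
            #{u : T | u ∈ E ∧ ht.level u = otypein (a+1) b}) :=
          Cardinal.mk_iUnion_le_sum_mk
      _ ≤ Cardinal.sum (fun _ : (a+1).ToType => lam) :=
          Cardinal.sum_le_sum _ _ (fun b => le_of_lt (h4 _))
      _ = #((a+1).ToType) * lam := Cardinal.sum_const' _ _
      _ ≤ lam * lam := by
          apply mul_le_mul_left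
          rw [Cardinal.mk_toType]
          have := Cardinal.lt_ord.1 ha1
          exact Order.lt_succ_iff.1 this
      _ = lam := Cardinal.mul_eq_self hinf
  -- KEY step
  have KEY : ∀ μ : Cardinal.{u}, μ.IsRegular → μ ≤ lam → ∀ δ₀,
      δ₀ < (Order.succ lam).ord →
      ∃ γ, γ < (Order.succ lam).ord ∧ μ ≤ #{x : T // x ∈ E ∧ ht.level x = γ} := by
    intro μ hμreg hμle δ₀ hδ₀
    have hN : ∃ N : Ordinal.{u} → Ordinal.{u},
        (∀ {a b : Ordinal.{u}}, a ≤ b → N a ≤ N b) ∧ (∀ a, a < N a) ∧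
        (∀ a, a < (Order.succ lam).ord → N a < (Order.succ lam).ord) ∧
        (∀ β u, u ∈ E → ht.level u ≤ β → ht.level (tw1 u) < N β) := by
      refine ⟨fun β => (⨆ u : {u : T // u ∈ E ∧ ht.level u ≤ β},
        (ht.level (tw1 u.1) + 1)) ⊔ (β + 1), ?_, ?_, ?_, ?_⟩
      · intro a b hab
        apply max_le_max ?_ (add_le_add_left hab 1)
        apply ciSup_le'
        intro u
        exact le_ciSup (Ordinal.bddAbove_range _)
          (⟨u.1, u.2.1, u.2.2.trans hab⟩ : {u : T // u ∈ E ∧ ht.level u ≤ b})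
      · exact fun a => lt_of_lt_of_le (lt_add_one a) le_sup_right
      · intro a ha
        apply max_lt ?_ (by rw [Ordinal.add_one_eq_succ]; exact ho_lim.succ_lt ha)
        apply Cardinal.iSup_lt_ord_of_isRegular (Cardinal.isRegular_succ hinf)
        · exact lt_of_le_of_lt (hC1 a ha) (Order.lt_succ lam)
        · intro u
          rw [Ordinal.add_one_eq_succ]
          exact ho_lim.succ_lt (hheight _)
      · intro β u huE hul
        refine lt_of_lt_of_le (lt_add_one _) (le_trans ?_ le_sup_left)
        exact le_ciSup (Ordinal.bddAbove_range _)
          (⟨u, huE, hul⟩ : {u : T // u ∈ E ∧ ht.level u ≤ β})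
    obtain ⟨N, hNmono, hNself, hNlt, hNtw⟩ := hN
    by_contra hKey
    push_neg at hKey
    set γ := gammaOf N δ₀ μ with hγdef
    have hγo : γ < (Order.succ lam).ord := gamma_lt_o hinf hNlt hμle hδ₀
    have hSγ : #{x : T // x ∈ E ∧ ht.level x = γ} < μ := hKey γ hγo
    have hγpos : (0 : Ordinal) < γ :=
      lt_of_le_of_lt (zero_le (a := δ₀)) (delta0_lt_gamma hNself hμreg)
    -- divergence data for pairs at level γ
    have hdiv : ∀ w : {x : T // x ∈ E ∧ ht.level x = γ} × {x : T // x ∈ E ∧ ht.level x = γ},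
        ∃ d : Ordinal.{u}, d < γ ∧
          (∀ p q : T, lt p w.1.1 → lt q w.2.1 → ht.level p = ht.level q → p ≠ q →
            ∃ p₀ q₀ : T, lt p₀ w.1.1 ∧ lt q₀ w.2.1 ∧ ht.level p₀ = d ∧ ht.level q₀ = d ∧
              p₀ ≠ q₀) := by
      intro w
      by_cases hD : ∃ δ : Ordinal.{u}, ∃ p q : T, lt p w.1.1 ∧ lt q w.2.1 ∧
          ht.level p = δ ∧ ht.level q = δ ∧ p ≠ q
      · set Dset : Set Ordinal.{u} := {δ | ∃ p q : T, lt p w.1.1 ∧ lt q w.2.1 ∧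
          ht.level p = δ ∧ ht.level q = δ ∧ p ≠ q} with hDset
        have hDne : Dset.Nonempty := hD
        have hmem := WellFounded.min_mem Ordinal.lt_wf Dset hDne
        obtain ⟨p₀, q₀, hp₀, hq₀, hl₀1, hl₀2, hne₀⟩ := hmem
        refine ⟨WellFounded.min Ordinal.lt_wf Dset hDne, ?_, ?_⟩
        · rw [← hl₀1]
          have := level_lt ht hp₀
          rwa [w.1.2.2] at this
        · exact fun _ _ _ _ _ _ => ⟨p₀, q₀, hp₀, hq₀, hl₀1, hl₀2, hne₀⟩
      · refine ⟨0, hγpos, fun p q hp hq hl hpq => absurd ⟨ht.level p, p, q, hp, hq, rfl,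
          hl.symm, hpq⟩ hD⟩
    choose dv hdvlt hdvwit using hdiv
    have hcard : #({x : T // x ∈ E ∧ ht.level x = γ} ×
        {x : T // x ∈ E ∧ ht.level x = γ}) < μ := by
      have hpq : #({x : T // x ∈ E ∧ ht.level x = γ} ×
          {x : T // x ∈ E ∧ ht.level x = γ}) = #{x : T // x ∈ E ∧ ht.level x = γ} *
          #{x : T // x ∈ E ∧ ht.level x = γ} := by
        simp [Cardinal.mk_prod]
      rw [hpq]
      exact Cardinal.mul_lt_of_lt hμreg.aleph0_le hSγ hSγ
    obtain ⟨b, hbγ, hbb⟩ := gamma_bdd hNself hμreg dv hcard hdvlt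
    have hb1γ : b + 1 < γ := by
      have h' : b + 1 ≤ N b := by
        rw [Ordinal.add_one_eq_succ]
        exact Order.succ_le_of_lt (hNself b)
      exact lt_of_le_of_lt h' (gamma_closed hNmono hNself hμreg hbγ)
    -- Claim: nodes at level γ sharing their predecessor at level b+1 have equal
    -- predecessors at every level
    have claim : ∀ (z₁ z₂ : {x : T // x ∈ E ∧ ht.level x = γ}) (u : T),
        lt u z₁.1 → lt u z₂.1 → ht.level u = b + 1 →
        ∀ p q : T, lt p z₁.1 → lt q z₂.1 → ht.level p = ht.level q → p = q := by
      intro z₁ z₂ u hu1 hu2 hul p q hp hq hl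
      by_contra hpq
      obtain ⟨p₀, q₀, hp₀, hq₀, hl₀1, hl₀2, hne₀⟩ := hdvwit (z₁, z₂) p q hp hq hl hpq
      have hd : dv (z₁, z₂) ≤ b := hbb (z₁, z₂)
      have hp₀u : lt p₀ u := pred_lt_pred ht hp₀ hu1
        (by rw [hl₀1, hul]; exact lt_of_le_of_lt hd (lt_add_one b))
      have hq₀u : lt q₀ u := pred_lt_pred ht hq₀ hu2
        (by rw [hl₀2, hul]; exact lt_of_le_of_lt hd (lt_add_one b))
      exact hne₀ (pred_unique ht hp₀u hq₀u (hl₀1.trans hl₀2.symm))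
    -- derive the contradiction
    obtain ⟨w, hwE, hwl⟩ := hE2 γ hγo
    obtain ⟨u0, hu0w, hu0l⟩ := exists_pred ht (x := w) (β := b + 1) (by rw [hwl]; exact hb1γ)
    have hu0E : u0 ∈ E := h2 w hwE u0 hu0w
    have hδ'γ : ht.level (tw1 u0) < γ := by
      have h1' : ht.level (tw1 u0) < N (b + 1) := hNtw (b + 1) u0 hu0E (le_of_eq hu0l)
      exact h1'.trans (gamma_closed hNmono hNself hμreg hb1γ)
    have hδ'2γ : ht.level (tw2 u0) < γ := by
      rw [← htwlev u0 hu0E]; exact hδ'γ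
    obtain ⟨z₁, hz₁E, hz₁l, hz₁r⟩ := hE1s (tw1 u0) (htwE1 u0 hu0E) γ hδ'γ hγo
    obtain ⟨z₂, hz₂E, hz₂l, hz₂r⟩ := hE1s (tw2 u0) (htwE2 u0 hu0E) γ hδ'2γ hγo
    have hu0z₁ : lt u0 z₁ := ht.trans (htwlt1 u0 hu0E) hz₁r
    have hu0z₂ : lt u0 z₂ := ht.trans (htwlt2 u0 hu0E) hz₂r
    have := claim ⟨z₁, hz₁E, hz₁l⟩ ⟨z₂, hz₂E, hz₂l⟩ u0 hu0z₁ hu0z₂ hu0l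
      (tw1 u0) (tw2 u0) hz₁r hz₂r (htwlev u0 hu0E)
    exact htwne u0 hu0E this
  -- Aggregate over all regular cardinals `μ ≤ lam`
  have hopos : (0 : Ordinal) < (Order.succ lam).ord := ho_lim.pos
  have hμa : ∀ a : lam.ord.ToType, ∃ μ : Cardinal.{u}, μ.IsRegular ∧ μ ≤ lam ∧
      (otypein lam.ord a).card < μ := by
    intro a
    have hκ : (otypein lam.ord a).card < lam := Cardinal.lt_ord.1 (otypein_lt_self _ a)
    by_cases hκinf : ℵ₀ ≤ (otypein lam.ord a).card
    · exact ⟨Order.succ _, Cardinal.isRegular_succ hκinf, Order.succ_le_of_lt hκ,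
        Order.lt_succ _⟩
    · exact ⟨ℵ₀, Cardinal.isRegular_aleph0, hinf, lt_of_not_ge hκinf⟩
  choose μf hμreg hμle hμgt using hμa
  have hda : ∀ a : lam.ord.ToType, ∃ γ, γ < (Order.succ lam).ord ∧
      μf a ≤ #{x : T // x ∈ E ∧ ht.level x = γ} :=
    fun a => KEY (μf a) (hμreg a) (hμle a) 0 hopos
  choose d hdo hdS using hda
  have hδs : (⨆ a, d a) < (Order.succ lam).ord := by
    apply Cardinal.iSup_lt_ord_of_isRegular (Cardinal.isRegular_succ hinf) ?_ hdo
    rw [Cardinal.mk_toType, Cardinal.card_ord]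
    exact Order.lt_succ lam
  have hfin : lam ≤ #{x : T // x ∈ E ∧ ht.level x = ⨆ a, d a} := by
    apply le_of_forall_lt
    intro c hc
    have hcoord : c.ord < lam.ord := Cardinal.ord_lt_ord.2 hc
    set a := oenum lam.ord c.ord hcoord with ha
    have h1' : c < μf a := by
      have := hμgt a
      rwa [ha, otypein_oenum, Cardinal.card_ord] at this
    have h2' : μf a ≤ #{x : T // x ∈ E ∧ ht.level x = d a} := hdS a
    have h3' : #{x : T // x ∈ E ∧ ht.level x = d a} ≤
        #{x : T // x ∈ E ∧ ht.level x = ⨆ a, d a} :=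
      hSmono _ _ (le_ciSup (Ordinal.bddAbove_range d) a) hδs
    exact h1'.trans_le (h2'.trans h3')
  exact absurd (h4 (⨆ a, d a)) (not_lt.2 hfin)
end
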